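/- arXiv:2106.02371 — 2 statements merged into one kernel-verified Lean document; each statement's English description precedes it below -/
import Mathlib

section
/- The social welfare has the following regularity properties: (a) for fixed (n, m), the map Φ ↦ 𝒲(Φ, n, m) is convex on ℝ^{𝒳×𝒴}; (b) for fixed Φ, the map (n, m) ↦ 𝒲(Φ, n, m) is concave on the set of strictly positive margin vectors; (c) 𝒲 is positively homogeneous of degree one in the margins: 𝒲(Φ, t·n, t·m) = t·𝒲(Φ, n, m) for every t > 0. -/
set_option linter.unusedSectionVars false


open MeasureTheory

noncomputable section

/-- Extension of `U : ι → ℝ` to `Option ι` by the value `0` at `none`. -/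
def optExt {ι : Type*} (U : ι → ℝ) : Option ι → ℝ := fun io => io.elim 0 U

/-- Maximum of a function over a finite nonempty type. -/
def fmax {ι : Type*} [Fintype ι] [Nonempty ι] (f : ι → ℝ) : ℝ :=
  Finset.univ.sup' Finset.univ_nonempty f

/-- The Emax operator `G(U) = ∫ max_{î ∈ ι₀} (U_î + ε_î) dP(ε)`. -/
def Emax {ι : Type*} [Fintype ι] [Nonempty ι]
    (P : Measure (Option ι → ℝ)) (U : ι → ℝ) : ℝ :=
  ∫ ε, fmax (fun io => optExt U io + ε io) ∂P

/-- The Legendre–Fenchel transform of the Emax operator, valued in `EReal`. -/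
def EmaxStar {ι : Type*} [Fintype ι] [Nonempty ι]
    (P : Measure (Option ι → ℝ)) (ν : ι → ℝ) : EReal :=
  ⨆ U : ι → ℝ, (((∑ i, ν i * U i) - Emax P U : ℝ) : EReal)

variable {X Y : Type*} [Fintype X] [Nonempty X] [DecidableEq X]
  [Fintype Y] [Nonempty Y] [DecidableEq Y]

/-- Aggregate welfare of men: `G(U, n) = Σ_x n_x G_x(U_{x·})`. -/
def GG (P : X → Measure (Option Y → ℝ)) (n : X → ℝ) (U : X → Y → ℝ) : ℝ :=
  ∑ x, n x * Emax (P x) (U x)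

/-- Aggregate welfare of women: `H(V, m) = Σ_y m_y H_y(V_{·y})`. -/
def HH (Q : Y → Measure (Option X → ℝ)) (m : Y → ℝ) (V : X → Y → ℝ) : ℝ :=
  ∑ y, m y * Emax (Q y) (fun x => V x y)

/-- A feasible matching. -/
def Feasible (n : X → ℝ) (m : Y → ℝ) (μ : X → Y → ℝ) : Prop :=
  (∀ x y, 0 ≤ μ x y) ∧ (∀ x, ∑ y, μ x y ≤ n x) ∧ (∀ y, ∑ x, μ x y ≤ m y)

/-- The generalized entropy of matching
`𝓔(μ, n, m) = −Σ_x n_x G_x*((μ_xy/n_x)_y) − Σ_y m_y H_y*((μ_xy/m_y)_x)`. -/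
def Ent (P : X → Measure (Option Y → ℝ)) (Q : Y → Measure (Option X → ℝ))
    (n : X → ℝ) (m : Y → ℝ) (μ : X → Y → ℝ) : EReal :=
  -(∑ x, ((n x : ℝ) : EReal) * EmaxStar (P x) (fun y => μ x y / n x))
    - ∑ y, ((m y : ℝ) : EReal) * EmaxStar (Q y) (fun x => μ x y / m y)

/-- The social gain of a matching `μ`: `Σ_{x,y} μ_xy Φ_xy + 𝓔(μ, n, m)`. -/
def SocialGain (P : X → Measure (Option Y → ℝ)) (Q : Y → Measure (Option X → ℝ))
    (n : X → ℝ) (m : Y → ℝ) (Φ : X → Y → ℝ) (μ : X → Y → ℝ) : EReal :=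
  ((∑ x, ∑ y, μ x y * Φ x y : ℝ) : EReal) + Ent P Q n m μ

/-- The social welfare `𝒲(Φ, n, m)`. -/
def Welfare (P : X → Measure (Option Y → ℝ)) (Q : Y → Measure (Option X → ℝ))
    (n : X → ℝ) (m : Y → ℝ) (Φ : X → Y → ℝ) : EReal :=
  ⨆ μ : {μ : X → Y → ℝ // Feasible n m μ}, SocialGain P Q n m Φ μ

/-- Full support: a measure charges every nonempty open set. -/
def HasFullSupport {α : Type*} [TopologicalSpace α] [MeasurableSpace α]
    (P : Measure α) : Prop :=
  ∀ s : Set α, IsOpen s → s.Nonempty → 0 < P s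

/-- The social welfare, as a real number. -/
def WelfareR (P : X → Measure (Option Y → ℝ)) (Q : Y → Measure (Option X → ℝ))
    (n : X → ℝ) (m : Y → ℝ) (Φ : X → Y → ℝ) : ℝ :=
  (Welfare P Q n m Φ).toReal

section Aux
variable {ι : Type*} [Fintype ι] [Nonempty ι]

lemma fmax_le {f : ι → ℝ} {c : ℝ} (h : ∀ i, f i ≤ c) : fmax f ≤ c :=
  Finset.sup'_le _ _ fun i _ => h i

lemma le_fmax (f : ι → ℝ) (i : ι) : f i ≤ fmax f :=
  Finset.le_sup' f (Finset.mem_univ i)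

lemma abs_fmax_le (f : ι → ℝ) : |fmax f| ≤ fmax (fun i => |f i|) := by
  rw [abs_le]
  refine ⟨?_, fmax_le fun i => (le_abs_self (f i)).trans (by simpa using le_fmax (fun j => |f j|) i)⟩
  have h1 := le_fmax f (Classical.arbitrary ι)
  have h2 := le_fmax (fun i => |f i|) (Classical.arbitrary ι)
  have h3 := neg_abs_le (f (Classical.arbitrary ι))
  linarith

variable (P : Measure (Option ι → ℝ)) [IsProbabilityMeasure P]
  (hP : Integrable (fun ε => fmax (fun io => |ε io|)) P)

include hP

lemma integrable_eval (io : Option ι) : Integrable (fun ε : Option ι → ℝ => ε io) P :=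
  hP.mono' (measurable_pi_apply io).aestronglyMeasurable
    (Filter.Eventually.of_forall fun ε => by
      simpa using le_fmax (fun j => |ε j|) io)

lemma integrable_fmax (U : ι → ℝ) :
    Integrable (fun ε : Option ι → ℝ => fmax (fun io => optExt U io + ε io)) P := by
  have hc : Continuous fun ε : Option ι → ℝ => fmax fun io => optExt U io + ε io := by
    unfold fmax
    exact Continuous.finset_sup'_apply _ fun io _ => continuous_const.add (continuous_apply io)
  refine Integrable.mono' ((integrable_const (fmax fun io => |optExt U io|)).add hP)
    hc.aestronglyMeasurable (Filter.Eventually.of_forall fun ε => ?_)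
  calc ‖fmax fun io => optExt U io + ε io‖
      ≤ fmax (fun io => |optExt U io + ε io|) := abs_fmax_le _
    _ ≤ fmax (fun io => |optExt U io|) + fmax (fun io => |ε io|) :=
        fmax_le fun io => (abs_add_le _ _).trans (add_le_add
          (by simpa using le_fmax (fun jo => |optExt U jo|) io)
          (by simpa using le_fmax (fun jo => |ε jo|) io))

lemma emax_ge (U : ι → ℝ) (io : Option ι) :
    optExt U io - (∫ ε, fmax (fun jo => |ε jo|) ∂P) ≤ Emax P U := by
  have h1 : ∫ ε, (optExt U io + ε io) ∂P ≤ Emax P U := by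
    refine integral_mono ((integrable_const _).add (integrable_eval P hP io))
      (integrable_fmax P hP U) (fun ε => by simpa using le_fmax (fun jo => optExt U jo + ε jo) io)
  have h2 : ∫ ε, (optExt U io + ε io) ∂P = optExt U io + ∫ ε, ε io ∂P := by
    rw [integral_add (integrable_const _) (integrable_eval P hP io)]
    simp
  have h3 : -(∫ ε, fmax (fun jo => |ε jo|) ∂P) ≤ ∫ ε, ε io ∂P := by
    rw [← integral_neg]
    refine integral_mono hP.neg (integrable_eval P hP io) (fun ε => ?_)
    have := le_fmax (fun jo => |ε jo|) io
    have := neg_abs_le (ε io)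
    linarith [le_fmax (fun jo => |ε jo|) io]
  linarith

end Aux

section Star
variable {ι : Type*} [Fintype ι] [Nonempty ι]
  (P : Measure (Option ι → ℝ)) [IsProbabilityMeasure P]
  (hP : Integrable (fun ε => fmax (fun io => |ε io|)) P)

include hP in
lemma emaxStar_le {ν : ι → ℝ} (hν0 : ∀ i, 0 ≤ ν i) (hν1 : ∑ i, ν i ≤ 1) :
    EmaxStar P ν ≤ ((∫ ε, fmax (fun jo => |ε jo|) ∂P : ℝ) : EReal) := by
  refine iSup_le fun U => EReal.coe_le_coe_iff.2 ?_
  set C := ∫ ε, fmax (fun jo => |ε jo|) ∂P with hC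
  have h0 : 0 ≤ Emax P U + C := by
    have := emax_ge P hP U none; simp [optExt] at this; linarith
  have hE : ∀ i, U i ≤ Emax P U + C := fun i => by
    have := emax_ge P hP U (some i); simp [optExt] at this; linarith
  have hsum : ∑ i, ν i * U i ≤ (∑ i, ν i) * (Emax P U + C) := by
    rw [Finset.sum_mul]
    exact Finset.sum_le_sum fun i _ => mul_le_mul_of_nonneg_left (hE i) (hν0 i)
  nlinarith [Finset.sum_nonneg (fun i (_ : i ∈ Finset.univ) => hν0 i)]

lemma coe_neg_emax_zero_le (ν : ι → ℝ) :
    ((-(Emax P (fun _ => 0)) : ℝ) : EReal) ≤ EmaxStar P ν := by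
  have := le_iSup (fun U : ι → ℝ => (((∑ i, ν i * U i) - Emax P U : ℝ) : EReal)) (fun _ => 0)
  simpa [EmaxStar] using this

lemma emaxStar_ne_bot (ν : ι → ℝ) : EmaxStar P ν ≠ ⊥ :=
  ((EReal.bot_lt_coe _).trans_le (coe_neg_emax_zero_le P ν)).ne'

include hP in
lemma emaxStar_ne_top {ν : ι → ℝ} (hν0 : ∀ i, 0 ≤ ν i) (hν1 : ∑ i, ν i ≤ 1) :
    EmaxStar P ν ≠ ⊤ :=
  ((emaxStar_le P hP hν0 hν1).trans_lt (EReal.coe_lt_top _)).ne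

include hP in
lemma key_ineq {ν : ι → ℝ} (hν0 : ∀ i, 0 ≤ ν i) (hν1 : ∑ i, ν i ≤ 1) (U : ι → ℝ) :
    (∑ i, ν i * U i) - Emax P U ≤ (EmaxStar P ν).toReal := by
  have h : (((∑ i, ν i * U i) - Emax P U : ℝ) : EReal) ≤ EmaxStar P ν :=
    le_iSup (fun U : ι → ℝ => (((∑ i, ν i * U i) - Emax P U : ℝ) : EReal)) U
  rw [← EReal.coe_toReal (emaxStar_ne_top P hP hν0 hν1) (emaxStar_ne_bot P ν)] at h
  exact EReal.coe_le_coe_iff.1 h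

include hP in
lemma starR_le_C {ν : ι → ℝ} (hν0 : ∀ i, 0 ≤ ν i) (hν1 : ∑ i, ν i ≤ 1) :
    (EmaxStar P ν).toReal ≤ ∫ ε, fmax (fun jo => |ε jo|) ∂P := by
  have := EReal.toReal_le_toReal (emaxStar_le P hP hν0 hν1) (emaxStar_ne_bot P ν)
    (EReal.coe_ne_top _)
  simpa using this

include hP in
lemma neg_emax_zero_le_starR {ν : ι → ℝ} (hν0 : ∀ i, 0 ≤ ν i) (hν1 : ∑ i, ν i ≤ 1) :
    -(Emax P (fun _ => 0)) ≤ (EmaxStar P ν).toReal := by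
  have := EReal.toReal_le_toReal (coe_neg_emax_zero_le P ν) (EReal.coe_ne_bot _)
    (emaxStar_ne_top P hP hν0 hν1)
  simpa using this

include hP in
lemma starR_convex {ν ν' : ι → ℝ} (hν0 : ∀ i, 0 ≤ ν i) (hν1 : ∑ i, ν i ≤ 1)
    (hν'0 : ∀ i, 0 ≤ ν' i) (hν'1 : ∑ i, ν' i ≤ 1)
    {a b : ℝ} (ha : 0 ≤ a) (hb : 0 ≤ b) (hab : a + b = 1) :
    (EmaxStar P (fun i => a * ν i + b * ν' i)).toReal
      ≤ a * (EmaxStar P ν).toReal + b * (EmaxStar P ν').toReal := by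
  have hle : EmaxStar P (fun i => a * ν i + b * ν' i)
      ≤ ((a * (EmaxStar P ν).toReal + b * (EmaxStar P ν').toReal : ℝ) : EReal) := by
    refine iSup_le fun U => EReal.coe_le_coe_iff.2 ?_
    have k1 := key_ineq P hP hν0 hν1 U
    have k2 := key_ineq P hP hν'0 hν'1 U
    have hsum : ∑ i, (a * ν i + b * ν' i) * U i
        = a * ∑ i, ν i * U i + b * ∑ i, ν' i * U i := by
      rw [Finset.mul_sum, Finset.mul_sum, ← Finset.sum_add_distrib]
      exact Finset.sum_congr rfl fun i _ => by ring
    rw [hsum]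
    have hE : a * Emax P U + b * Emax P U = Emax P U := by rw [← add_mul, hab, one_mul]
    linarith [mul_le_mul_of_nonneg_left k1 ha, mul_le_mul_of_nonneg_left k2 hb]
  have := EReal.toReal_le_toReal hle (emaxStar_ne_bot P _) (EReal.coe_ne_top _)
  rwa [EReal.toReal_coe] at this

end Star

lemma ereal_coe_finset_sum {α : Type*} (s : Finset α) (f : α → ℝ) :
    ((∑ i ∈ s, f i : ℝ) : EReal) = ∑ i ∈ s, ((f i : ℝ) : EReal) := by
  classical
  induction s using Finset.induction with
  | empty => simp
  | insert a s h ih => rw [Finset.sum_insert h, Finset.sum_insert h, EReal.coe_add, ih]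

lemma ereal_coe_ciSup {α : Type*} [Nonempty α] (f : α → ℝ) (h : BddAbove (Set.range f)) :
    (⨆ i, ((f i : ℝ) : EReal)) = (((⨆ i, f i : ℝ)) : EReal) := by
  refine le_antisymm (iSup_le fun i => EReal.coe_le_coe_iff.2 (le_ciSup h i)) ?_
  have hmem : ∀ i, ((f i : ℝ) : EReal) ≤ ⨆ j, ((f j : ℝ) : EReal) :=
    fun i => le_iSup (fun j => ((f j : ℝ) : EReal)) i
  set S := ⨆ i, ((f i : ℝ) : EReal) with hS
  have hbot : S ≠ ⊥ := by
    intro hb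
    have := hmem (Classical.arbitrary α)
    rw [hb, le_bot_iff] at this
    exact EReal.coe_ne_bot _ this
  by_cases htop : S = ⊤
  · rw [htop]; exact le_top
  · have hfi : ∀ i, f i ≤ S.toReal := fun i => by
      have h2 := hmem i
      rw [← EReal.coe_toReal htop hbot] at h2
      exact EReal.coe_le_coe_iff.1 h2
    calc ((⨆ i, f i : ℝ) : EReal) ≤ ((S.toReal : ℝ) : EReal) :=
          EReal.coe_le_coe_iff.2 (ciSup_le hfi)
      _ = S := EReal.coe_toReal htop hbot

def gainR (P : X → Measure (Option Y → ℝ)) (Q : Y → Measure (Option X → ℝ))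
    (n : X → ℝ) (m : Y → ℝ) (Φ : X → Y → ℝ) (μ : X → Y → ℝ) : ℝ :=
  (∑ x, ∑ y, μ x y * Φ x y)
    - ∑ x, n x * (EmaxStar (P x) (fun y => μ x y / n x)).toReal
    - ∑ y, m y * (EmaxStar (Q y) (fun x => μ x y / m y)).toReal

section Welf

variable (P : X → Measure (Option Y → ℝ)) (Q : Y → Measure (Option X → ℝ))
  [∀ x, IsProbabilityMeasure (P x)] [∀ y, IsProbabilityMeasure (Q y)]
  (hPint : ∀ x, Integrable (fun ε => fmax (fun yo => |ε yo|)) (P x))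
  (hQint : ∀ y, Integrable (fun η => fmax (fun xo => |η xo|)) (Q y))
  {n : X → ℝ} {m : Y → ℝ} (hn : ∀ x, 0 < n x) (hm : ∀ y, 0 < m y)

include hn in
lemma row_nonneg {μ : X → Y → ℝ} (hμ : Feasible n m μ) (x : X) :
    ∀ y, 0 ≤ μ x y / n x := fun y => div_nonneg (hμ.1 x y) (hn x).le

include hn in
lemma row_sum {μ : X → Y → ℝ} (hμ : Feasible n m μ) (x : X) :
    ∑ y, μ x y / n x ≤ 1 := by
  rw [← Finset.sum_div]
  exact (div_le_one (hn x)).2 (hμ.2.1 x)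

include hm in
lemma col_nonneg {μ : X → Y → ℝ} (hμ : Feasible n m μ) (y : Y) :
    ∀ x, 0 ≤ μ x y / m y := fun x => div_nonneg (hμ.1 x y) (hm y).le

include hm in
lemma col_sum {μ : X → Y → ℝ} (hμ : Feasible n m μ) (y : Y) :
    ∑ x, μ x y / m y ≤ 1 := by
  rw [← Finset.sum_div]
  exact (div_le_one (hm y)).2 (hμ.2.2 y)

include hPint hQint hn hm in
lemma socialGain_eq {μ : X → Y → ℝ} (hμ : Feasible n m μ) (Φ : X → Y → ℝ) :
    SocialGain P Q n m Φ μ = ((gainR P Q n m Φ μ : ℝ) : EReal) := by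
  have hx : ∀ x : X, ((n x : ℝ) : EReal) * EmaxStar (P x) (fun y => μ x y / n x)
      = ((n x * (EmaxStar (P x) fun y => μ x y / n x).toReal : ℝ) : EReal) := fun x => by
    conv_lhs => rw [← EReal.coe_toReal
      (emaxStar_ne_top (P x) (hPint x) (row_nonneg hn hμ x) (row_sum hn hμ x))
      (emaxStar_ne_bot (P x) _)]
    rw [← EReal.coe_mul]
  have hy : ∀ y : Y, ((m y : ℝ) : EReal) * EmaxStar (Q y) (fun x => μ x y / m y)
      = ((m y * (EmaxStar (Q y) fun x => μ x y / m y).toReal : ℝ) : EReal) := fun y => by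
    conv_lhs => rw [← EReal.coe_toReal
      (emaxStar_ne_top (Q y) (hQint y) (col_nonneg hm hμ y) (col_sum hm hμ y))
      (emaxStar_ne_bot (Q y) _)]
    rw [← EReal.coe_mul]
  unfold SocialGain Ent gainR
  rw [Finset.sum_congr rfl (fun x _ => hx x), Finset.sum_congr rfl (fun y _ => hy y),
    ← ereal_coe_finset_sum, ← ereal_coe_finset_sum, ← EReal.coe_neg, ← EReal.coe_sub,
    ← EReal.coe_add, EReal.coe_eq_coe_iff]
  ring

lemma bddAbove_of_le {α : Type*} (f : α → ℝ) (B : ℝ) (h : ∀ a, f a ≤ B) :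
    BddAbove (Set.range f) := ⟨B, by rintro r ⟨a, rfl⟩; exact h a⟩

include hn in
lemma mu_entry_le {μ : X → Y → ℝ} (hμ : Feasible n m μ) (x : X) (y : Y) : μ x y ≤ n x :=
  le_trans (Finset.single_le_sum (fun y _ => hμ.1 x y) (Finset.mem_univ y)) (hμ.2.1 x)

include hPint hQint hn hm in
lemma gainR_le_bound (Φ : X → Y → ℝ) {μ : X → Y → ℝ} (hμ : Feasible n m μ) :
    gainR P Q n m Φ μ ≤ (∑ x, ∑ y, n x * |Φ x y|)
      + (∑ x, n x * Emax (P x) (fun _ => 0)) + (∑ y, m y * Emax (Q y) (fun _ => 0)) := by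
  unfold gainR
  have h1 : ∑ x, ∑ y, μ x y * Φ x y ≤ ∑ x, ∑ y, n x * |Φ x y| := by
    refine Finset.sum_le_sum fun x _ => Finset.sum_le_sum fun y _ => ?_
    calc μ x y * Φ x y ≤ μ x y * |Φ x y| :=
          mul_le_mul_of_nonneg_left (le_abs_self _) (hμ.1 x y)
      _ ≤ n x * |Φ x y| := mul_le_mul_of_nonneg_right (mu_entry_le hn hμ x y) (abs_nonneg _)
  have h2 : ∑ x, n x * (-(Emax (P x) fun _ => 0))
      ≤ ∑ x, n x * (EmaxStar (P x) (fun y => μ x y / n x)).toReal :=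
    Finset.sum_le_sum fun x _ => mul_le_mul_of_nonneg_left
      (neg_emax_zero_le_starR (P x) (hPint x) (row_nonneg hn hμ x) (row_sum hn hμ x)) (hn x).le
  have h3 : ∑ y, m y * (-(Emax (Q y) fun _ => 0))
      ≤ ∑ y, m y * (EmaxStar (Q y) (fun x => μ x y / m y)).toReal :=
    Finset.sum_le_sum fun y _ => mul_le_mul_of_nonneg_left
      (neg_emax_zero_le_starR (Q y) (hQint y) (col_nonneg hm hμ y) (col_sum hm hμ y)) (hm y).le
  have e2 : ∑ x, n x * (-(Emax (P x) fun _ => 0)) = -∑ x, n x * Emax (P x) (fun _ => 0) := by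
    simp [mul_neg]
  have e3 : ∑ y, m y * (-(Emax (Q y) fun _ => 0)) = -∑ y, m y * Emax (Q y) (fun _ => 0) := by
    simp [mul_neg]
  rw [e2] at h2; rw [e3] at h3
  linarith

include hn hm in
lemma feasible_zero : Feasible n m (fun _ _ => (0 : ℝ)) := by
  refine ⟨fun _ _ => le_refl _, fun x => ?_, fun y => ?_⟩ <;> simp [(hn _).le, (hm _).le]

include hPint hQint hn hm in
lemma gain_bdd (Φ : X → Y → ℝ) :
    BddAbove (Set.range fun μ : {μ : X → Y → ℝ // Feasible n m μ} =>
      gainR P Q n m Φ (μ : X → Y → ℝ)) :=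
  bddAbove_of_le _ _ fun μ => gainR_le_bound P Q hPint hQint hn hm Φ μ.2

include hPint hQint hn hm in
lemma welfareR_eq (Φ : X → Y → ℝ) :
    WelfareR P Q n m Φ
      = ⨆ μ : {μ : X → Y → ℝ // Feasible n m μ}, gainR P Q n m Φ (μ : X → Y → ℝ) := by
  have hne : Nonempty {μ : X → Y → ℝ // Feasible n m μ} :=
    ⟨⟨fun _ _ => 0, feasible_zero hn hm⟩⟩
  unfold WelfareR Welfare
  rw [iSup_congr (fun μ : {μ : X → Y → ℝ // Feasible n m μ} =>
    socialGain_eq P Q hPint hQint hn hm μ.2 Φ)]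
  rw [ereal_coe_ciSup _ (gain_bdd P Q hPint hQint hn hm Φ), EReal.toReal_coe]

end Welf

lemma convex_pos {a b u v : ℝ} (ha : 0 ≤ a) (hb : 0 ≤ b) (hab : a + b = 1)
    (hu : 0 < u) (hv : 0 < v) : 0 < a * u + b * v := by
  rcases eq_or_lt_of_le ha with h | h
  · have hb1 : b = 1 := by linarith
    rw [← h, hb1]
    simpa using hv
  · have h1 : 0 < a * u := mul_pos h hu
    have h2 : 0 ≤ b * v := mul_nonneg hb hv.le
    linarith

lemma ciSup_add_combo {α β : Type*} [Nonempty α] [Nonempty β] (f : α → ℝ) (g : β → ℝ)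
    {a b c : ℝ} (ha : 0 ≤ a) (hb : 0 ≤ b) (hab : a + b = 1)
    (h : ∀ p q, a * f p + b * g q ≤ c) :
    a * (⨆ p, f p) + b * (⨆ q, g q) ≤ c := by
  have p0 : α := Classical.arbitrary α
  have q0 : β := Classical.arbitrary β
  rcases eq_or_lt_of_le ha with ha0 | ha0
  · have hb1 : b = 1 := by linarith
    have : (⨆ q, g q) ≤ c := ciSup_le fun q => by
      have := h p0 q
      rw [← ha0, hb1] at this
      linarith
    rw [← ha0, hb1]
    linarith
  · rcases eq_or_lt_of_le hb with hb0 | hb0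
    · have ha1 : a = 1 := by linarith
      have : (⨆ p, f p) ≤ c := ciSup_le fun p => by
        have := h p q0
        rw [← hb0, ha1] at this
        linarith
      rw [← hb0, ha1]
      linarith
    · have hg : ∀ p, (⨆ q, g q) ≤ (c - a * f p) / b := fun p =>
        ciSup_le fun q => (le_div_iff₀ hb0).2 (by nlinarith [h p q])
      have hf : (⨆ p, f p) ≤ (c - b * (⨆ q, g q)) / a := ciSup_le fun p => by
        have := (le_div_iff₀ hb0).1 (hg p)
        exact (le_div_iff₀ ha0).2 (by nlinarith)
      have := (le_div_iff₀ ha0).1 hf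
      nlinarith

section Mix
variable (P : X → Measure (Option Y → ℝ)) (Q : Y → Measure (Option X → ℝ))
  [∀ x, IsProbabilityMeasure (P x)] [∀ y, IsProbabilityMeasure (Q y)]
  (hPint : ∀ x, Integrable (fun ε => fmax (fun yo => |ε yo|)) (P x))
  (hQint : ∀ y, Integrable (fun η => fmax (fun xo => |η xo|)) (Q y))

lemma gainR_phi_mix (n : X → ℝ) (m : Y → ℝ) (Φ₁ Φ₂ : X → Y → ℝ) {a b : ℝ} (hab : a + b = 1)
    (μ : X → Y → ℝ) :
    gainR P Q n m (a • Φ₁ + b • Φ₂) μ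
      = a * gainR P Q n m Φ₁ μ + b * gainR P Q n m Φ₂ μ := by
  unfold gainR
  have h1 : ∑ x, ∑ y, μ x y * (a • Φ₁ + b • Φ₂) x y
      = a * (∑ x, ∑ y, μ x y * Φ₁ x y) + b * (∑ x, ∑ y, μ x y * Φ₂ x y) := by
    simp only [Pi.add_apply, Pi.smul_apply, smul_eq_mul, Finset.mul_sum,
      ← Finset.sum_add_distrib]
    exact Finset.sum_congr rfl fun x _ => Finset.sum_congr rfl fun y _ => by ring
  rw [h1]
  set e := ∑ x, n x * (EmaxStar (P x) (fun y => μ x y / n x)).toReal with he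
  set f := ∑ y, m y * (EmaxStar (Q y) (fun x => μ x y / m y)).toReal with hf
  linear_combination (e + f) * hab

include hPint hQint in
lemma gainR_perspective (Φ : X → Y → ℝ) {n n' : X → ℝ} {m m' : Y → ℝ}
    (hn : ∀ x, 0 < n x) (hn' : ∀ x, 0 < n' x) (hm : ∀ y, 0 < m y) (hm' : ∀ y, 0 < m' y)
    {μ μ' : X → Y → ℝ} (hμ : Feasible n m μ) (hμ' : Feasible n' m' μ')
    {a b : ℝ} (ha : 0 ≤ a) (hb : 0 ≤ b) (hab : a + b = 1) :
    a * gainR P Q n m Φ μ + b * gainR P Q n' m' Φ μ'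
      ≤ gainR P Q (fun x => a * n x + b * n' x) (fun y => a * m y + b * m' y) Φ
          (fun x y => a * μ x y + b * μ' x y) := by
  have hS : ∑ x, ∑ y, (a * μ x y + b * μ' x y) * Φ x y
      = a * (∑ x, ∑ y, μ x y * Φ x y) + b * (∑ x, ∑ y, μ' x y * Φ x y) := by
    simp only [Finset.mul_sum, ← Finset.sum_add_distrib]
    exact Finset.sum_congr rfl fun x _ => Finset.sum_congr rfl fun y _ => by ring
  have hE : ∀ x : X, (a * n x + b * n' x)
        * (EmaxStar (P x) (fun y => (a * μ x y + b * μ' x y) / (a * n x + b * n' x))).toReal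
      ≤ a * (n x * (EmaxStar (P x) (fun y => μ x y / n x)).toReal)
        + b * (n' x * (EmaxStar (P x) (fun y => μ' x y / n' x)).toReal) := by
    intro x
    have hpos : 0 < a * n x + b * n' x := convex_pos ha hb hab (hn x) (hn' x)
    set lam := a * n x / (a * n x + b * n' x) with hlam
    set lam' := b * n' x / (a * n x + b * n' x) with hlam'
    have hlam0 : 0 ≤ lam := div_nonneg (mul_nonneg ha (hn x).le) hpos.le
    have hlam'0 : 0 ≤ lam' := div_nonneg (mul_nonneg hb (hn' x).le) hpos.le
    have hlamsum : lam + lam' = 1 := by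
      rw [hlam, hlam', ← add_div, div_self hpos.ne']
    have hfun : (fun y => (a * μ x y + b * μ' x y) / (a * n x + b * n' x))
        = fun y => lam * (μ x y / n x) + lam' * (μ' x y / n' x) := by
      funext y
      rw [hlam, hlam']
      field_simp [hpos.ne', (hn x).ne', (hn' x).ne']
    rw [hfun]
    have hconv := starR_convex (P x) (hPint x) (row_nonneg hn hμ x) (row_sum hn hμ x)
      (row_nonneg hn' hμ' x) (row_sum hn' hμ' x) hlam0 hlam'0 hlamsum
    have hmul := mul_le_mul_of_nonneg_left hconv hpos.le
    calc (a * n x + b * n' x) * (EmaxStar (P x)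
          (fun y => lam * (μ x y / n x) + lam' * (μ' x y / n' x))).toReal
        ≤ (a * n x + b * n' x) * (lam * (EmaxStar (P x) (fun y => μ x y / n x)).toReal
            + lam' * (EmaxStar (P x) (fun y => μ' x y / n' x)).toReal) := hmul
      _ = a * (n x * (EmaxStar (P x) (fun y => μ x y / n x)).toReal)
            + b * (n' x * (EmaxStar (P x) (fun y => μ' x y / n' x)).toReal) := by
          rw [hlam, hlam']
          field_simp [hpos.ne']
  have hF : ∀ y : Y, (a * m y + b * m' y)
        * (EmaxStar (Q y) (fun x => (a * μ x y + b * μ' x y) / (a * m y + b * m' y))).toReal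
      ≤ a * (m y * (EmaxStar (Q y) (fun x => μ x y / m y)).toReal)
        + b * (m' y * (EmaxStar (Q y) (fun x => μ' x y / m' y)).toReal) := by
    intro y
    have hpos : 0 < a * m y + b * m' y := convex_pos ha hb hab (hm y) (hm' y)
    set lam := a * m y / (a * m y + b * m' y) with hlam
    set lam' := b * m' y / (a * m y + b * m' y) with hlam'
    have hlam0 : 0 ≤ lam := div_nonneg (mul_nonneg ha (hm y).le) hpos.le
    have hlam'0 : 0 ≤ lam' := div_nonneg (mul_nonneg hb (hm' y).le) hpos.le
    have hlamsum : lam + lam' = 1 := by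
      rw [hlam, hlam', ← add_div, div_self hpos.ne']
    have hfun : (fun x => (a * μ x y + b * μ' x y) / (a * m y + b * m' y))
        = fun x => lam * (μ x y / m y) + lam' * (μ' x y / m' y) := by
      funext x
      rw [hlam, hlam']
      field_simp [hpos.ne', (hm y).ne', (hm' y).ne']
    rw [hfun]
    have hconv := starR_convex (Q y) (hQint y) (col_nonneg hm hμ y) (col_sum hm hμ y)
      (col_nonneg hm' hμ' y) (col_sum hm' hμ' y) hlam0 hlam'0 hlamsum
    have hmul := mul_le_mul_of_nonneg_left hconv hpos.le
    calc (a * m y + b * m' y) * (EmaxStar (Q y)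
          (fun x => lam * (μ x y / m y) + lam' * (μ' x y / m' y))).toReal
        ≤ (a * m y + b * m' y) * (lam * (EmaxStar (Q y) (fun x => μ x y / m y)).toReal
            + lam' * (EmaxStar (Q y) (fun x => μ' x y / m' y)).toReal) := hmul
      _ = a * (m y * (EmaxStar (Q y) (fun x => μ x y / m y)).toReal)
            + b * (m' y * (EmaxStar (Q y) (fun x => μ' x y / m' y)).toReal) := by
          rw [hlam, hlam']
          field_simp [hpos.ne']
  have hEsum := Finset.sum_le_sum (fun x (_ : x ∈ Finset.univ) => hE x)
  have hFsum := Finset.sum_le_sum (fun y (_ : y ∈ Finset.univ) => hF y)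
  rw [Finset.sum_add_distrib] at hEsum hFsum
  simp only [← Finset.mul_sum] at hEsum hFsum
  unfold gainR
  rw [hS]
  linarith
end Mix

section Homog
variable (P : X → Measure (Option Y → ℝ)) (Q : Y → Measure (Option X → ℝ))
  [∀ x, IsProbabilityMeasure (P x)] [∀ y, IsProbabilityMeasure (Q y)]
  (hPint : ∀ x, Integrable (fun ε => fmax (fun yo => |ε yo|)) (P x))
  (hQint : ∀ y, Integrable (fun η => fmax (fun xo => |η xo|)) (Q y))

lemma feasible_mix {n n' : X → ℝ} {m m' : Y → ℝ} {μ μ' : X → Y → ℝ}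
    (hμ : Feasible n m μ) (hμ' : Feasible n' m' μ') {a b : ℝ} (ha : 0 ≤ a) (hb : 0 ≤ b) :
    Feasible (fun x => a * n x + b * n' x) (fun y => a * m y + b * m' y)
      (fun x y => a * μ x y + b * μ' x y) := by
  refine ⟨fun x y => add_nonneg (mul_nonneg ha (hμ.1 x y)) (mul_nonneg hb (hμ'.1 x y)),
    fun x => ?_, fun y => ?_⟩
  · rw [Finset.sum_add_distrib, ← Finset.mul_sum, ← Finset.mul_sum]
    exact add_le_add (mul_le_mul_of_nonneg_left (hμ.2.1 x) ha)
      (mul_le_mul_of_nonneg_left (hμ'.2.1 x) hb)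
  · rw [Finset.sum_add_distrib, ← Finset.mul_sum, ← Finset.mul_sum]
    exact add_le_add (mul_le_mul_of_nonneg_left (hμ.2.2 y) ha)
      (mul_le_mul_of_nonneg_left (hμ'.2.2 y) hb)

lemma feasible_smul {n : X → ℝ} {m : Y → ℝ} {μ : X → Y → ℝ} {t : ℝ} (ht : 0 < t)
    (hμ : Feasible n m μ) : Feasible (t • n) (t • m) (fun x y => t * μ x y) := by
  refine ⟨fun x y => mul_nonneg ht.le (hμ.1 x y), fun x => ?_, fun y => ?_⟩
  · rw [← Finset.mul_sum]
    simpa [smul_eq_mul] using mul_le_mul_of_nonneg_left (hμ.2.1 x) ht.le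
  · rw [← Finset.mul_sum]
    simpa [smul_eq_mul] using mul_le_mul_of_nonneg_left (hμ.2.2 y) ht.le

lemma feasible_unsmul {n : X → ℝ} {m : Y → ℝ} {μ : X → Y → ℝ} {t : ℝ} (ht : 0 < t)
    (hμ : Feasible (t • n) (t • m) μ) : Feasible n m (fun x y => t⁻¹ * μ x y) := by
  refine ⟨fun x y => mul_nonneg (inv_nonneg.2 ht.le) (hμ.1 x y), fun x => ?_, fun y => ?_⟩
  · rw [← Finset.mul_sum]
    have := mul_le_mul_of_nonneg_left (hμ.2.1 x) (inv_nonneg.2 ht.le)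
    simpa [smul_eq_mul, inv_mul_cancel_left₀ ht.ne'] using this
  · rw [← Finset.mul_sum]
    have := mul_le_mul_of_nonneg_left (hμ.2.2 y) (inv_nonneg.2 ht.le)
    simpa [smul_eq_mul, inv_mul_cancel_left₀ ht.ne'] using this

lemma gainR_smul (n : X → ℝ) (m : Y → ℝ) (Φ μ : X → Y → ℝ) {t : ℝ} (ht : 0 < t)
    (hn : ∀ x, 0 < n x) (hm : ∀ y, 0 < m y) :
    gainR P Q (t • n) (t • m) Φ (fun x y => t * μ x y) = t * gainR P Q n m Φ μ := by
  unfold gainR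
  have hdx : ∀ x : X, (fun y => (t * μ x y) / ((t • n) x)) = fun y => μ x y / n x :=
    fun x => funext fun y => by
      simp only [Pi.smul_apply, smul_eq_mul]
      rw [mul_div_mul_left _ _ ht.ne']
  have hdy : ∀ y : Y, (fun x => (t * μ x y) / ((t • m) y)) = fun x => μ x y / m y :=
    fun y => funext fun x => by
      simp only [Pi.smul_apply, smul_eq_mul]
      rw [mul_div_mul_left _ _ ht.ne']
  have h1 : ∑ x, ∑ y, (t * μ x y) * Φ x y = t * ∑ x, ∑ y, μ x y * Φ x y := by
    rw [Finset.mul_sum]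
    exact Finset.sum_congr rfl fun x _ => by
      rw [Finset.mul_sum]; exact Finset.sum_congr rfl fun y _ => by ring
  have h2 : ∑ x, (t • n) x * (EmaxStar (P x) (fun y => (t * μ x y) / ((t • n) x))).toReal
      = t * ∑ x, n x * (EmaxStar (P x) (fun y => μ x y / n x)).toReal := by
    rw [Finset.mul_sum]
    refine Finset.sum_congr rfl fun x _ => ?_
    rw [hdx x]
    simp only [Pi.smul_apply, smul_eq_mul]
    ring
  have h3 : ∑ y, (t • m) y * (EmaxStar (Q y) (fun x => (t * μ x y) / ((t • m) y))).toReal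
      = t * ∑ y, m y * (EmaxStar (Q y) (fun x => μ x y / m y)).toReal := by
    rw [Finset.mul_sum]
    refine Finset.sum_congr rfl fun y _ => ?_
    rw [hdy y]
    simp only [Pi.smul_apply, smul_eq_mul]
    ring
  rw [h1, h2, h3]
  ring

include hPint hQint in
lemma welfare_homog {n : X → ℝ} {m : Y → ℝ} (hn : ∀ x, 0 < n x) (hm : ∀ y, 0 < m y)
    (Φ : X → Y → ℝ) {t : ℝ} (ht : 0 < t) :
    WelfareR P Q (t • n) (t • m) Φ = t * WelfareR P Q n m Φ := by
  have htn : ∀ x, 0 < (t • n) x := fun x => by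
    simpa [smul_eq_mul] using mul_pos ht (hn x)
  have htm : ∀ y, 0 < (t • m) y := fun y => by
    simpa [smul_eq_mul] using mul_pos ht (hm y)
  haveI hne : Nonempty {μ : X → Y → ℝ // Feasible n m μ} :=
    ⟨⟨fun _ _ => 0, feasible_zero hn hm⟩⟩
  haveI hne' : Nonempty {μ : X → Y → ℝ // Feasible (t • n) (t • m) μ} :=
    ⟨⟨fun _ _ => 0, feasible_zero htn htm⟩⟩
  rw [welfareR_eq P Q hPint hQint htn htm Φ, welfareR_eq P Q hPint hQint hn hm Φ]
  apply le_antisymm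
  · refine ciSup_le fun μs => ?_
    obtain ⟨μ, hμ⟩ := μs
    have hν : Feasible n m (fun x y => t⁻¹ * μ x y) := feasible_unsmul ht hμ
    have hrew : gainR P Q (t • n) (t • m) Φ μ
        = t * gainR P Q n m Φ (fun x y => t⁻¹ * μ x y) := by
      rw [← gainR_smul P Q n m Φ (fun x y => t⁻¹ * μ x y) ht hn hm]
      congr 1
      funext x y
      rw [mul_inv_cancel_left₀ ht.ne']
    show gainR P Q (t • n) (t • m) Φ μ ≤ _
    rw [hrew]
    exact mul_le_mul_of_nonneg_left
      (le_ciSup (gain_bdd P Q hPint hQint hn hm Φ) ⟨_, hν⟩) ht.le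
  · rw [Real.mul_iSup_of_nonneg ht.le]
    refine ciSup_le fun μs => ?_
    obtain ⟨μ, hμ⟩ := μs
    show t * gainR P Q n m Φ μ ≤ _
    rw [← gainR_smul P Q n m Φ μ ht hn hm]
    exact le_ciSup (gain_bdd P Q hPint hQint htn htm Φ) ⟨_, feasible_smul ht hμ⟩

end Homog


/-- **Regularity of the social welfare (Corollary, Appendix B).**
`𝒲(Φ, n, m)` is (a) convex in `Φ`, (b) concave in the margins `(n, m)` on the
positive orthant, and (c) positively homogeneous of degree one in the margins. -/
theorem welfare_regularity
    (P : X → Measure (Option Y → ℝ)) (Q : Y → Measure (Option X → ℝ))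
    [∀ x, IsProbabilityMeasure (P x)] [∀ y, IsProbabilityMeasure (Q y)]
    (hPint : ∀ x, Integrable (fun ε => fmax (fun yo => |ε yo|)) (P x))
    (hQint : ∀ y, Integrable (fun η => fmax (fun xo => |η xo|)) (Q y))
    (n : X → ℝ) (m : Y → ℝ) (hn : ∀ x, 0 < n x) (hm : ∀ y, 0 < m y) :
    -- (a) convexity in Φ for fixed margins
    ConvexOn ℝ Set.univ (fun Φ : X → Y → ℝ => WelfareR P Q n m Φ) ∧
    -- (b) concavity in the margins on the positive orthant, for each fixed Φ
    (∀ Φ : X → Y → ℝ,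
      ConcaveOn ℝ {p : (X → ℝ) × (Y → ℝ) | (∀ x, 0 < p.1 x) ∧ (∀ y, 0 < p.2 y)}
        (fun p => WelfareR P Q p.1 p.2 Φ)) ∧
    -- (c) positive homogeneity of degree one in the margins
    (∀ (Φ : X → Y → ℝ) (t : ℝ), 0 < t →
      WelfareR P Q (t • n) (t • m) Φ = t * WelfareR P Q n m Φ) := by
  haveI hne : Nonempty {μ : X → Y → ℝ // Feasible n m μ} :=
    ⟨⟨fun _ _ => 0, feasible_zero hn hm⟩⟩
  refine ⟨⟨convex_univ, fun Φ₁ _ Φ₂ _ a b ha hb hab => ?_⟩, fun Φ => ⟨?_, ?_⟩,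
    fun Φ t ht => welfare_homog P Q hPint hQint hn hm Φ ht⟩
  · -- (a) convexity in Φ
    simp only [smul_eq_mul]
    rw [welfareR_eq P Q hPint hQint hn hm (a • Φ₁ + b • Φ₂),
      welfareR_eq P Q hPint hQint hn hm Φ₁, welfareR_eq P Q hPint hQint hn hm Φ₂]
    refine ciSup_le fun μ => ?_
    rw [gainR_phi_mix P Q n m Φ₁ Φ₂ hab]
    exact add_le_add
      (mul_le_mul_of_nonneg_left (le_ciSup (gain_bdd P Q hPint hQint hn hm Φ₁) μ) ha)
      (mul_le_mul_of_nonneg_left (le_ciSup (gain_bdd P Q hPint hQint hn hm Φ₂) μ) hb)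
  · -- convexity of the positive orthant
    intro p hp q hq a b ha hb hab
    refine ⟨fun x => ?_, fun y => ?_⟩
    · have : (a • p + b • q).1 x = a * p.1 x + b * q.1 x := by
        simp [smul_eq_mul]
      rw [this]
      exact convex_pos ha hb hab (hp.1 x) (hq.1 x)
    · have : (a • p + b • q).2 y = a * p.2 y + b * q.2 y := by
        simp [smul_eq_mul]
      rw [this]
      exact convex_pos ha hb hab (hp.2 y) (hq.2 y)
  · -- (b) concavity in the margins
    intro p hp q hq a b ha hb hab
    obtain ⟨hp1, hp2⟩ := hp
    obtain ⟨hq1, hq2⟩ := hq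
    have h1 : (a • p + b • q).1 = fun x => a * p.1 x + b * q.1 x := by
      funext x; simp [smul_eq_mul]
    have h2 : (a • p + b • q).2 = fun y => a * p.2 y + b * q.2 y := by
      funext y; simp [smul_eq_mul]
    have hmix1 : ∀ x, 0 < a * p.1 x + b * q.1 x :=
      fun x => convex_pos ha hb hab (hp1 x) (hq1 x)
    have hmix2 : ∀ y, 0 < a * p.2 y + b * q.2 y :=
      fun y => convex_pos ha hb hab (hp2 y) (hq2 y)
    haveI hnep : Nonempty {μ : X → Y → ℝ // Feasible p.1 p.2 μ} :=
      ⟨⟨fun _ _ => 0, feasible_zero hp1 hp2⟩⟩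
    haveI hneq : Nonempty {μ : X → Y → ℝ // Feasible q.1 q.2 μ} :=
      ⟨⟨fun _ _ => 0, feasible_zero hq1 hq2⟩⟩
    simp only [smul_eq_mul, h1, h2]
    rw [welfareR_eq P Q hPint hQint hp1 hp2 Φ, welfareR_eq P Q hPint hQint hq1 hq2 Φ,
      welfareR_eq P Q hPint hQint hmix1 hmix2 Φ]
    refine ciSup_add_combo _ _ ha hb hab fun μp μq => ?_
    calc a * gainR P Q p.1 p.2 Φ (μp : X → Y → ℝ) + b * gainR P Q q.1 q.2 Φ (μq : X → Y → ℝ)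
        ≤ gainR P Q (fun x => a * p.1 x + b * q.1 x) (fun y => a * p.2 y + b * q.2 y) Φ
            (fun x y => a * (μp : X → Y → ℝ) x y + b * (μq : X → Y → ℝ) x y) :=
          gainR_perspective P Q hPint hQint Φ hp1 hq1 hp2 hq2 μp.2 μq.2 ha hb hab
      _ ≤ _ := le_ciSup (gain_bdd P Q hPint hQint hmix1 hmix2 Φ)
            ⟨_, feasible_mix μp.2 μq.2 ha hb⟩

end
end

section
/- Assume the full-support assumption, fix K linearly independent basis surplus vectors φ^1, …, φ^K : 𝒳×𝒴 → ℝ, and for λ ∈ ℝ^K set Φ^λ = Σ_{k=1}^K λ_k φ^k. For each λ let μ^λ denote the (unique) maximizer of μ ↦ Σ_{x,y} μ_xy Φ^λ_xy + 𝓔(μ, n, m) over feasible matchings. Let μ̂ be a feasible matching with μ̂_xy > 0, μ̂_x0 > 0, μ̂_0y > 0 for all x, y, and suppose λ̂ ∈ ℝ^K maximizes λ ↦ Σ_{x,y} μ̂_xy Φ^λ_xy − 𝒲(Φ^λ, n, m) over ℝ^K. Then: (1) μ^{λ̂} maximizes 𝓔(μ, n, m) over all feasible matchings μ satisfying the moment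 constraints Σ_{x,y} μ_xy φ^k_xy = Σ_{x,y} μ̂_xy φ^k_xy for every k = 1, …, K; (2) 𝓔(μ̂, n, m) ≤ 𝓔(μ^{λ̂}, n, m), with equality if and only if μ^{λ̂} = μ̂; in particular equality holds whenever μ̂ = μ^{λ} for some λ ∈ ℝ^K. -/
set_option linter.unusedSectionVars false
set_option maxHeartbeats 1000000
open MeasureTheory Filter Topology

noncomputable section

variable {X Y : Type*} [Fintype X] [Nonempty X] [DecidableEq X]
  [Fintype Y] [Nonempty Y] [DecidableEq Y]

namespace Aux
section General
variable {ι : Type*} [Fintype ι] [Nonempty ι]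

lemma le_fmax (f : ι → ℝ) (i : ι) : f i ≤ fmax f := Finset.le_sup' f (Finset.mem_univ i)
lemma fmax_le {f : ι → ℝ} {c : ℝ} (h : ∀ i, f i ≤ c) : fmax f ≤ c :=
  Finset.sup'_le _ _ (fun i _ => h i)
lemma abs_fmax_le {f g : ι → ℝ} (h : ∀ i, |f i| ≤ g i) : |fmax f| ≤ fmax g := by
  rw [abs_le]
  refine ⟨?_, fmax_le (fun i => (abs_le.1 (h i)).2.trans (le_fmax g i))⟩
  obtain ⟨i⟩ := ‹Nonempty ι›
  have := (abs_le.1 (h i)).1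
  calc -fmax g ≤ -g i := neg_le_neg (le_fmax g i)
  _ ≤ f i := by linarith
  _ ≤ fmax f := le_fmax f i
lemma measurable_fmax_comp {α : Type*} [MeasurableSpace α] {g : ι → α → ℝ}
    (hg : ∀ i, Measurable (g i)) :
    Measurable (fun ε => fmax (fun i => g i ε)) := by
  have : (fun ε => fmax (fun i => g i ε)) = Finset.univ.sup' Finset.univ_nonempty g := by
    funext ε; rw [Finset.sup'_apply]; rfl
  rw [this]
  exact Finset.measurable_sup' _ (fun i _ => hg i)

variable {P : Measure (Option ι → ℝ)} [IsProbabilityMeasure P]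

lemma integrable_emax_integrand
    (hPint : Integrable (fun ε => fmax (fun io => |ε io|)) P) (U : ι → ℝ) :
    Integrable (fun ε : Option ι → ℝ => fmax (fun io => optExt U io + ε io)) P := by
  refine Integrable.mono' ((integrable_const (fmax (fun io => |optExt U io|))).add hPint)
    ?_ (Eventually.of_forall (fun ε => ?_))
  · exact (measurable_fmax_comp (fun io =>
      (measurable_const.add (measurable_pi_apply io)))).aestronglyMeasurable
  · rw [Real.norm_eq_abs]
    calc |fmax fun io => optExt U io + ε io|
        ≤ fmax (fun io : Option ι => |optExt U io| + |ε io|) :=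
          abs_fmax_le (fun io => abs_add_le _ _)
      _ ≤ fmax (fun io : Option ι => |optExt U io|) + fmax (fun io => |ε io|) :=
          fmax_le (fun io => add_le_add (le_fmax (fun j => |optExt U j|) io) (le_fmax (fun j => |ε j|) io))

lemma integrable_eval_none
    (hPint : Integrable (fun ε => fmax (fun io => |ε io|)) P) :
    Integrable (fun ε : Option ι → ℝ => ε none) P := by
  refine Integrable.mono' hPint (measurable_pi_apply none).aestronglyMeasurable
    (Eventually.of_forall (fun ε => ?_))
  rw [Real.norm_eq_abs]
  exact le_fmax (fun io => |ε io|) none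

lemma e0_le_emax (hPint : Integrable (fun ε => fmax (fun io => |ε io|)) P) (U : ι → ℝ) :
    ∫ ε, ε none ∂P ≤ Emax P U := by
  refine integral_mono (integrable_eval_none hPint) (integrable_emax_integrand hPint U)
    (fun ε => ?_)
  have h0 : optExt U none = 0 := rfl
  calc ε none = optExt U none + ε none := by rw [h0]; ring
  _ ≤ fmax (fun io => optExt U io + ε io) := le_fmax (fun io => optExt U io + ε io) none

lemma le_emaxStar (ν : ι → ℝ) (U : ι → ℝ) :
    (((∑ i, ν i * U i) - Emax P U : ℝ) : EReal) ≤ EmaxStar P ν :=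
  le_iSup (fun V : ι → ℝ => (((∑ i, ν i * V i) - Emax P V : ℝ) : EReal)) U

lemma emaxStar_le {ν : ι → ℝ} {c : ℝ} (h : ∀ U, (∑ i, ν i * U i) - Emax P U ≤ c) :
    EmaxStar P ν ≤ (c : EReal) :=
  iSup_le (fun U => by exact_mod_cast h U)

lemma neg_emax_zero_le (ν : ι → ℝ) : ((-Emax P 0 : ℝ) : EReal) ≤ EmaxStar P ν := by
  have := le_emaxStar (P := P) ν 0
  simpa using this

lemma emaxStar_ne_bot (ν : ι → ℝ) : EmaxStar P ν ≠ ⊥ :=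
  fun h => by simpa [h] using neg_emax_zero_le (P := P) ν

lemma emaxStar_zero_le (hPint : Integrable (fun ε => fmax (fun io => |ε io|)) P) :
    EmaxStar P (fun _ => 0) ≤ ((-∫ ε, ε none ∂P : ℝ) : EReal) :=
  emaxStar_le (fun U => by
    simpa using neg_le_neg (e0_le_emax hPint U))

lemma emaxStar_le_limit {ν : ℕ → ι → ℝ} {ν' : ι → ℝ}
    (hν : ∀ i, Tendsto (fun j => ν j i) atTop (𝓝 (ν' i)))
    {s : ℕ → ℝ} {s' : ℝ} (hs : Tendsto s atTop (𝓝 s'))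
    (hle : ∀ j, EmaxStar P (ν j) ≤ ((s j : ℝ) : EReal)) :
    EmaxStar P ν' ≤ ((s' : ℝ) : EReal) := by
  refine iSup_le (fun U => ?_)
  have hre : ∀ j, (∑ i, ν j i * U i) - Emax P U ≤ s j := fun j => by
    exact_mod_cast (le_emaxStar (ν j) U).trans (hle j)
  have htend : Tendsto (fun j => (∑ i, ν j i * U i) - Emax P U) atTop
      (𝓝 ((∑ i, ν' i * U i) - Emax P U)) := by
    exact ((tendsto_finset_sum _ (fun i _ => (hν i).mul_const (U i))).sub tendsto_const_nhds)
  exact_mod_cast le_of_tendsto_of_tendsto' htend hs hre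


end General


lemma coe_sum {α : Type*} (s : Finset α) (f : α → ℝ) :
    ((∑ a ∈ s, f a : ℝ) : EReal) = ∑ a ∈ s, ((f a : ℝ) : EReal) :=
  map_sum (⟨⟨Real.toEReal, EReal.coe_zero⟩, EReal.coe_add⟩ : ℝ →+ EReal) f s

lemma ereal_sum_ne_bot {α : Type*} {s : Finset α} {f : α → EReal}
    (h : ∀ a ∈ s, f a ≠ ⊥) : ∑ a ∈ s, f a ≠ ⊥ := by
  classical
  induction s using Finset.induction_on with
  | empty => simp
  | insert a s' hnotmem ih =>
    rw [Finset.sum_insert hnotmem]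
    intro hc
    rcases EReal.add_eq_bot_iff.1 hc with h1 | h1
    · exact h a (Finset.mem_insert_self a s') h1
    · exact ih (fun b hb => h b (Finset.mem_insert_of_mem hb)) h1

lemma ereal_sum_eq_top {α : Type*} {s : Finset α} {f : α → EReal} {a : α}
    (ha : a ∈ s) (h : f a = ⊤) (h' : ∀ b ∈ s, f b ≠ ⊥) : ∑ b ∈ s, f b = ⊤ := by
  classical
  rw [← Finset.add_sum_erase s f ha, h]
  exact EReal.top_add_of_ne_bot (ereal_sum_ne_bot (fun b hb => h' b (Finset.mem_of_mem_erase hb)))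

lemma coe_mul_ne_bot {r : ℝ} (hr : 0 < r) {a : EReal} (ha : a ≠ ⊥) : (r : EReal) * a ≠ ⊥ := by
  induction a using EReal.rec with
  | bot => exact absurd rfl ha
  | coe s => rw [← EReal.coe_mul]; exact EReal.coe_ne_bot _
  | top => rw [EReal.coe_mul_top_of_pos hr]; simp

lemma coe_mul_eq_top_iff {r : ℝ} (hr : 0 < r) {a : EReal} : (r : EReal) * a = ⊤ ↔ a = ⊤ := by
  induction a using EReal.rec with
  | bot => rw [EReal.coe_mul_bot_of_pos hr]
  | coe s =>
    rw [← EReal.coe_mul]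
    constructor <;> intro h <;> exact absurd h (EReal.coe_ne_top _)
  | top => rw [EReal.coe_mul_top_of_pos hr]

lemma coe_mul_le_coe {r s : ℝ} (hr : 0 < r) {a : EReal} (ha : a ≤ (s : EReal)) :
    (r : EReal) * a ≤ ((r * s : ℝ) : EReal) := by
  induction a using EReal.rec with
  | bot => rw [EReal.coe_mul_bot_of_pos hr]; exact bot_le
  | coe u =>
    rw [← EReal.coe_mul, EReal.coe_le_coe_iff]
    exact mul_le_mul_of_nonneg_left (by exact_mod_cast ha) hr.le
  | top => exact absurd ha (not_le.2 (EReal.coe_lt_top s))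

lemma coe_le_coe_mul {r s : ℝ} (hr : 0 < r) {a : EReal} (ha : (s : EReal) ≤ a) :
    ((r * s : ℝ) : EReal) ≤ (r : EReal) * a := by
  induction a using EReal.rec with
  | bot => exact absurd (le_bot_iff.1 ha) (EReal.coe_ne_bot s)
  | coe u =>
    rw [← EReal.coe_mul, EReal.coe_le_coe_iff]
    exact mul_le_mul_of_nonneg_left (by exact_mod_cast ha) hr.le
  | top => rw [EReal.coe_mul_top_of_pos hr]; exact le_top


end Aux

namespace Aux

section EntLemmas

variable {X Y : Type*} [Fintype X] [Nonempty X] [DecidableEq X]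
  [Fintype Y] [Nonempty Y] [DecidableEq Y]
  (P : X → Measure (Option Y → ℝ)) (Q : Y → Measure (Option X → ℝ))
  [∀ x, IsProbabilityMeasure (P x)] [∀ y, IsProbabilityMeasure (Q y)]
  (n : X → ℝ) (m : Y → ℝ)

lemma ent_ne_top (hn : ∀ x, 0 < n x) (hm : ∀ y, 0 < m y) (μ : X → Y → ℝ) :
    Ent P Q n m μ ≠ ⊤ := by
  have hA : (∑ x, ((n x : ℝ) : EReal) * EmaxStar (P x) (fun y => μ x y / n x)) ≠ ⊥ :=
    ereal_sum_ne_bot (fun x _ => coe_mul_ne_bot (hn x) (emaxStar_ne_bot _))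
  have hB : (∑ y, ((m y : ℝ) : EReal) * EmaxStar (Q y) (fun x => μ x y / m y)) ≠ ⊥ :=
    ereal_sum_ne_bot (fun y _ => coe_mul_ne_bot (hm y) (emaxStar_ne_bot _))
  rw [Ent, sub_eq_add_neg]
  exact (EReal.add_lt_top (by rwa [ne_eq, EReal.neg_eq_top_iff])
    (by rwa [ne_eq, EReal.neg_eq_top_iff])).ne

lemma ent_le_bound (hn : ∀ x, 0 < n x) (hm : ∀ y, 0 < m y) (μ : X → Y → ℝ) :
    Ent P Q n m μ ≤
      ((∑ x, n x * Emax (P x) 0 + ∑ y, m y * Emax (Q y) 0 : ℝ) : EReal) := by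
  have hA : ((∑ x, n x * (-Emax (P x) 0) : ℝ) : EReal) ≤
      ∑ x, ((n x : ℝ) : EReal) * EmaxStar (P x) (fun y => μ x y / n x) := by
    rw [coe_sum]
    exact Finset.sum_le_sum (fun x _ => coe_le_coe_mul (hn x) (neg_emax_zero_le _))
  have hB : ((∑ y, m y * (-Emax (Q y) 0) : ℝ) : EReal) ≤
      ∑ y, ((m y : ℝ) : EReal) * EmaxStar (Q y) (fun x => μ x y / m y) := by
    rw [coe_sum]
    exact Finset.sum_le_sum (fun y _ => coe_le_coe_mul (hm y) (neg_emax_zero_le _))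
  calc Ent P Q n m μ
      ≤ -((∑ x, n x * (-Emax (P x) 0) : ℝ) : EReal)
        + -((∑ y, m y * (-Emax (Q y) 0) : ℝ) : EReal) := by
        rw [Ent, sub_eq_add_neg]
        exact add_le_add (EReal.neg_le_neg_iff.2 hA) (EReal.neg_le_neg_iff.2 hB)
    _ = ((∑ x, n x * Emax (P x) 0 + ∑ y, m y * Emax (Q y) 0 : ℝ) : EReal) := by
        rw [← EReal.coe_neg, ← EReal.coe_neg, ← EReal.coe_add]
        norm_cast
        simp [mul_neg]

lemma emaxStar_fst_ne_top (hn : ∀ x, 0 < n x) (μ : X → Y → ℝ)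
    (h : Ent P Q n m μ ≠ ⊥) (x : X) :
    EmaxStar (P x) (fun y => μ x y / n x) ≠ ⊤ := by
  intro htop
  have hA : (∑ x, ((n x : ℝ) : EReal) * EmaxStar (P x) (fun y => μ x y / n x)) = ⊤ :=
    ereal_sum_eq_top (Finset.mem_univ x)
      (by rw [htop]; exact EReal.coe_mul_top_of_pos (hn x))
      (fun b _ => coe_mul_ne_bot (hn b) (emaxStar_ne_bot _))
  apply h
  rw [Ent, hA, sub_eq_add_neg, EReal.neg_top, EReal.bot_add]

lemma emaxStar_snd_ne_top (hm : ∀ y, 0 < m y) (μ : X → Y → ℝ)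
    (h : Ent P Q n m μ ≠ ⊥) (y : Y) :
    EmaxStar (Q y) (fun x => μ x y / m y) ≠ ⊤ := by
  intro htop
  have hB : (∑ y, ((m y : ℝ) : EReal) * EmaxStar (Q y) (fun x => μ x y / m y)) = ⊤ :=
    ereal_sum_eq_top (Finset.mem_univ y)
      (by rw [htop]; exact EReal.coe_mul_top_of_pos (hm y))
      (fun b _ => coe_mul_ne_bot (hm b) (emaxStar_ne_bot _))
  apply h
  rw [Ent, hB, sub_eq_add_neg, EReal.neg_top, EReal.add_bot]

lemma ent_eq_coe (hn : ∀ x, 0 < n x) (hm : ∀ y, 0 < m y) (μ : X → Y → ℝ)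
    (h : Ent P Q n m μ ≠ ⊥) :
    Ent P Q n m μ =
      ((-(∑ x, n x * (EmaxStar (P x) (fun y => μ x y / n x)).toReal)
        - ∑ y, m y * (EmaxStar (Q y) (fun x => μ x y / m y)).toReal : ℝ) : EReal) := by
  have hA : (∑ x, ((n x : ℝ) : EReal) * EmaxStar (P x) (fun y => μ x y / n x)) =
      ((∑ x, n x * (EmaxStar (P x) (fun y => μ x y / n x)).toReal : ℝ) : EReal) := by
    rw [coe_sum]
    refine Finset.sum_congr rfl (fun x _ => ?_)
    rw [EReal.coe_mul,
      EReal.coe_toReal (emaxStar_fst_ne_top P Q n m hn μ h x) (emaxStar_ne_bot _)]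
  have hB : (∑ y, ((m y : ℝ) : EReal) * EmaxStar (Q y) (fun x => μ x y / m y)) =
      ((∑ y, m y * (EmaxStar (Q y) (fun x => μ x y / m y)).toReal : ℝ) : EReal) := by
    rw [coe_sum]
    refine Finset.sum_congr rfl (fun y _ => ?_)
    rw [EReal.coe_mul,
      EReal.coe_toReal (emaxStar_snd_ne_top P Q n m hm μ h y) (emaxStar_ne_bot _)]
  rw [Ent, hA, hB, ← EReal.coe_neg, ← EReal.coe_sub]

lemma coe_le_ent (hn : ∀ x, 0 < n x) (hm : ∀ y, 0 < m y) (μ : X → Y → ℝ)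
    (sx : X → ℝ) (sy : Y → ℝ)
    (hx : ∀ x, EmaxStar (P x) (fun y => μ x y / n x) ≤ ((sx x : ℝ) : EReal))
    (hy : ∀ y, EmaxStar (Q y) (fun x => μ x y / m y) ≤ ((sy y : ℝ) : EReal)) :
    ((-(∑ x, n x * sx x) - ∑ y, m y * sy y : ℝ) : EReal) ≤ Ent P Q n m μ := by
  have hA : (∑ x, ((n x : ℝ) : EReal) * EmaxStar (P x) (fun y => μ x y / n x)) ≤
      ((∑ x, n x * sx x : ℝ) : EReal) := by
    rw [coe_sum]
    exact Finset.sum_le_sum (fun x _ => coe_mul_le_coe (hn x) (hx x))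
  have hB : (∑ y, ((m y : ℝ) : EReal) * EmaxStar (Q y) (fun x => μ x y / m y)) ≤
      ((∑ y, m y * sy y : ℝ) : EReal) := by
    rw [coe_sum]
    exact Finset.sum_le_sum (fun y _ => coe_mul_le_coe (hm y) (hy y))
  calc ((-(∑ x, n x * sx x) - ∑ y, m y * sy y : ℝ) : EReal)
      = -((∑ x, n x * sx x : ℝ) : EReal) + -((∑ y, m y * sy y : ℝ) : EReal) := by
        rw [← EReal.coe_neg, ← EReal.coe_neg, ← EReal.coe_add]
        norm_cast
    _ ≤ Ent P Q n m μ := by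
        rw [Ent, sub_eq_add_neg]
        exact add_le_add (EReal.neg_le_neg_iff.2 hA) (EReal.neg_le_neg_iff.2 hB)

lemma ent_ne_bot_of_le (hn : ∀ x, 0 < n x) (hm : ∀ y, 0 < m y) (μ : X → Y → ℝ)
    (sx : X → ℝ) (sy : Y → ℝ)
    (hx : ∀ x, EmaxStar (P x) (fun y => μ x y / n x) ≤ ((sx x : ℝ) : EReal))
    (hy : ∀ y, EmaxStar (Q y) (fun x => μ x y / m y) ≤ ((sy y : ℝ) : EReal)) :
    Ent P Q n m μ ≠ ⊥ := by
  intro hbot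
  have := coe_le_ent P Q n m hn hm μ sx sy hx hy
  rw [hbot, le_bot_iff] at this
  exact EReal.coe_ne_bot _ this

end EntLemmas

end Aux

/-- The bilinear pairing `Σ_{x,y} μ_xy f_xy`. -/
def Lpair {X Y : Type*} [Fintype X] [Fintype Y] (μ f : X → Y → ℝ) : ℝ :=
  ∑ x, ∑ y, μ x y * f x y

namespace Aux

section WelfLemmas

variable {X Y : Type*} [Fintype X] [Nonempty X] [DecidableEq X]
  [Fintype Y] [Nonempty Y] [DecidableEq Y]
  (P : X → Measure (Option Y → ℝ)) (Q : Y → Measure (Option X → ℝ))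
  [∀ x, IsProbabilityMeasure (P x)] [∀ y, IsProbabilityMeasure (Q y)]
  (n : X → ℝ) (m : Y → ℝ)

lemma continuous_Lpair (f : X → Y → ℝ) : Continuous (fun μ : X → Y → ℝ => Lpair μ f) :=
  continuous_finset_sum _ fun x _ => continuous_finset_sum _ fun y _ =>
    (by fun_prop)

lemma mu_le_n {μ : X → Y → ℝ} (hfeas : Feasible n m μ) (x : X) (y : Y) : μ x y ≤ n x :=
  (Finset.single_le_sum (fun y' _ => hfeas.1 x y') (Finset.mem_univ y)).trans (hfeas.2.1 x)

lemma abs_Lpair_le {μ : X → Y → ℝ} (hfeas : Feasible n m μ) (f : X → Y → ℝ) :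
    |Lpair μ f| ≤ ∑ x, ∑ y, n x * |f x y| := by
  calc |Lpair μ f| ≤ ∑ x, |∑ y, μ x y * f x y| := Finset.abs_sum_le_sum_abs _ _
    _ ≤ ∑ x, ∑ y, |μ x y * f x y| :=
        Finset.sum_le_sum fun x _ => Finset.abs_sum_le_sum_abs _ _
    _ ≤ ∑ x, ∑ y, n x * |f x y| := by
        refine Finset.sum_le_sum fun x _ => Finset.sum_le_sum fun y _ => ?_
        rw [abs_mul, abs_of_nonneg (hfeas.1 x y)]
        exact mul_le_mul_of_nonneg_right (mu_le_n n m hfeas x y) (abs_nonneg _)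

lemma Lpair_sum {K : ℕ} (lam : Fin K → ℝ) (φ : Fin K → X → Y → ℝ) (μ : X → Y → ℝ) :
    Lpair μ (fun x y => ∑ k, lam k * φ k x y) = ∑ k, lam k * Lpair μ (φ k) := by
  unfold Lpair
  calc (∑ x, ∑ y, μ x y * ∑ k, lam k * φ k x y)
      = ∑ x, ∑ y, ∑ k, lam k * (μ x y * φ k x y) := by
        refine Finset.sum_congr rfl fun x _ => Finset.sum_congr rfl fun y _ => ?_
        rw [Finset.mul_sum]
        exact Finset.sum_congr rfl fun k _ => by ring
    _ = ∑ x, ∑ k, ∑ y, lam k * (μ x y * φ k x y) :=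
        Finset.sum_congr rfl fun x _ => Finset.sum_comm
    _ = ∑ k, ∑ x, ∑ y, lam k * (μ x y * φ k x y) := Finset.sum_comm
    _ = ∑ k, lam k * ∑ x, ∑ y, μ x y * φ k x y := by
        refine Finset.sum_congr rfl fun k _ => ?_
        rw [Finset.mul_sum]
        exact Finset.sum_congr rfl fun x _ => by rw [Finset.mul_sum]

lemma socialGain_eq (Φ μ : X → Y → ℝ) :
    SocialGain P Q n m Φ μ = ((Lpair μ Φ : ℝ) : EReal) + Ent P Q n m μ := rfl

lemma socialGain_le_welfare (Φ : X → Y → ℝ) {μ : X → Y → ℝ} (hfeas : Feasible n m μ) :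
    SocialGain P Q n m Φ μ ≤ Welfare P Q n m Φ :=
  le_iSup (fun μp : {μ' : X → Y → ℝ // Feasible n m μ'} =>
    SocialGain P Q n m Φ μp.1) (⟨μ, hfeas⟩ : {μ' : X → Y → ℝ // Feasible n m μ'})

lemma welfare_le {Φ : X → Y → ℝ} {c : EReal}
    (h : ∀ μ : X → Y → ℝ, Feasible n m μ → SocialGain P Q n m Φ μ ≤ c) :
    Welfare P Q n m Φ ≤ c :=
  iSup_le fun μp => h μp.1 μp.2

lemma feasible_zero (hn : ∀ x, 0 < n x) (hm : ∀ y, 0 < m y) :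
    Feasible n m (fun _ _ => (0 : ℝ)) :=
  ⟨fun _ _ => le_refl 0, fun x => by simpa using (hn x).le, fun y => by simpa using (hm y).le⟩

lemma ent_zero_ne_bot
    (hPint : ∀ x, Integrable (fun ε => fmax (fun yo => |ε yo|)) (P x))
    (hQint : ∀ y, Integrable (fun η => fmax (fun xo => |η xo|)) (Q y))
    (hn : ∀ x, 0 < n x) (hm : ∀ y, 0 < m y) :
    Ent P Q n m (fun _ _ => (0 : ℝ)) ≠ ⊥ := by
  refine ent_ne_bot_of_le P Q n m hn hm _ (fun x => -∫ ε, ε none ∂(P x))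
    (fun y => -∫ η, η none ∂(Q y)) (fun x => ?_) (fun y => ?_)
  · have hfun : (fun _ : Y => (0 : ℝ) / n x) = (fun _ : Y => (0 : ℝ)) := funext fun _ => zero_div _
    rw [hfun]
    exact emaxStar_zero_le (hPint x)
  · have hfun : (fun _ : X => (0 : ℝ) / m y) = (fun _ : X => (0 : ℝ)) := funext fun _ => zero_div _
    rw [hfun]
    exact emaxStar_zero_le (hQint y)

lemma welfare_ne_bot
    (hPint : ∀ x, Integrable (fun ε => fmax (fun yo => |ε yo|)) (P x))
    (hQint : ∀ y, Integrable (fun η => fmax (fun xo => |η xo|)) (Q y))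
    (hn : ∀ x, 0 < n x) (hm : ∀ y, 0 < m y) (Φ : X → Y → ℝ) :
    Welfare P Q n m Φ ≠ ⊥ := by
  have hz : SocialGain P Q n m Φ (fun _ _ => (0 : ℝ)) ≠ ⊥ := by
    rw [socialGain_eq]
    intro hc
    rcases EReal.add_eq_bot_iff.1 hc with h1 | h1
    · exact EReal.coe_ne_bot _ h1
    · exact ent_zero_ne_bot P Q n m hPint hQint hn hm h1
  exact ne_bot_of_le_ne_bot hz
    (socialGain_le_welfare P Q n m Φ (feasible_zero n m hn hm))

lemma welfare_ne_top (hn : ∀ x, 0 < n x) (hm : ∀ y, 0 < m y) (Φ : X → Y → ℝ) :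
    Welfare P Q n m Φ ≠ ⊤ := by
  have hb : Welfare P Q n m Φ ≤ (((∑ x, ∑ y, n x * |Φ x y|) +
      (∑ x, n x * Emax (P x) 0 + ∑ y, m y * Emax (Q y) 0) : ℝ) : EReal) := by
    refine welfare_le P Q n m (fun μ hfeas => ?_)
    rw [socialGain_eq, EReal.coe_add]
    exact add_le_add (EReal.coe_le_coe_iff.2 ((le_abs_self _).trans
      (abs_Lpair_le n m hfeas Φ))) (ent_le_bound P Q n m hn hm μ)
  exact (hb.trans_lt (EReal.coe_lt_top _)).ne

end WelfLemmas

end Aux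

-- MAINPLACEHOLDER

/-- **Moment matching and maximum entropy (Theorem 6.2–6.3).** The matching
predicted by the moment-matching estimator `λ̂` maximizes the generalized
entropy among feasible matchings with the observed comoments; the entropy of
the observed matching is no larger, with equality iff the model fits exactly —
in particular whenever `μ̂ = μ^λ` for some `λ`. -/
theorem moment_matching_max_entropy
    (P : X → Measure (Option Y → ℝ)) (Q : Y → Measure (Option X → ℝ))
    [∀ x, IsProbabilityMeasure (P x)] [∀ y, IsProbabilityMeasure (Q y)]
    (hPint : ∀ x, Integrable (fun ε => fmax (fun yo => |ε yo|)) (P x))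
    (hQint : ∀ y, Integrable (fun η => fmax (fun xo => |η xo|)) (Q y))
    (hPsupp : ∀ x, HasFullSupport (P x))
    (hQsupp : ∀ y, HasFullSupport (Q y))
    (hPac : ∀ x, P x ≪ (volume : Measure (Option Y → ℝ)))
    (hQac : ∀ y, Q y ≪ (volume : Measure (Option X → ℝ)))
    (n : X → ℝ) (m : Y → ℝ) (hn : ∀ x, 0 < n x) (hm : ∀ y, 0 < m y)
    -- the linearly independent basis surplus vectors
    (K : ℕ) (hK : 0 < K) (φ : Fin K → X → Y → ℝ)
    (hφ : LinearIndependent ℝ φ)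
    -- μ^λ is the unique maximizer of the social gain for surplus Φ^λ
    (muOf : (Fin K → ℝ) → X → Y → ℝ)
    (hμfeas : ∀ lam, Feasible n m (muOf lam))
    (hμmax : ∀ lam (μ' : X → Y → ℝ), Feasible n m μ' →
      SocialGain P Q n m (fun x y => ∑ k, lam k * φ k x y) μ' ≤
        SocialGain P Q n m (fun x y => ∑ k, lam k * φ k x y) (muOf lam))
    (hμuniq : ∀ lam (μ' : X → Y → ℝ), Feasible n m μ' →
      (∀ μ'' : X → Y → ℝ, Feasible n m μ'' →
        SocialGain P Q n m (fun x y => ∑ k, lam k * φ k x y) μ'' ≤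
          SocialGain P Q n m (fun x y => ∑ k, lam k * φ k x y) μ') →
      μ' = muOf lam)
    -- the observed matching, strictly interior
    (μhat : X → Y → ℝ) (hhatfeas : Feasible n m μhat)
    (hhatpos : ∀ x y, 0 < μhat x y)
    (hhatx0 : ∀ x, 0 < n x - ∑ y, μhat x y)
    (hhat0y : ∀ y, 0 < m y - ∑ x, μhat x y)
    -- the moment-matching estimator
    (lamhat : Fin K → ℝ)
    (hlamhat : ∀ lam : Fin K → ℝ,
      (∑ x, ∑ y, μhat x y * ∑ k, lam k * φ k x y) -
          WelfareR P Q n m (fun x y => ∑ k, lam k * φ k x y) ≤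
        (∑ x, ∑ y, μhat x y * ∑ k, lamhat k * φ k x y) -
          WelfareR P Q n m (fun x y => ∑ k, lamhat k * φ k x y)) :
    -- (1) μ^λ̂ maximizes the entropy under the moment constraints
    ((∀ k : Fin K,
        ∑ x, ∑ y, muOf lamhat x y * φ k x y = ∑ x, ∑ y, μhat x y * φ k x y) ∧
      (∀ μ : X → Y → ℝ, Feasible n m μ →
        (∀ k : Fin K, ∑ x, ∑ y, μ x y * φ k x y = ∑ x, ∑ y, μhat x y * φ k x y) →
        Ent P Q n m μ ≤ Ent P Q n m (muOf lamhat))) ∧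
    -- (2) the observed entropy is dominated, with equality iff exact fit
    (Ent P Q n m μhat ≤ Ent P Q n m (muOf lamhat) ∧
      (Ent P Q n m μhat = Ent P Q n m (muOf lamhat) ↔ muOf lamhat = μhat) ∧
      (∀ lam : Fin K → ℝ, μhat = muOf lam →
        Ent P Q n m μhat = Ent P Q n m (muOf lamhat))) := by
  classical
  set Phi : (Fin K → ℝ) → X → Y → ℝ := fun lam x y => ∑ k, lam k * φ k x y with hPhidef
  have hWne : ∀ lam : Fin K → ℝ,
      ((WelfareR P Q n m (Phi lam) : ℝ) : EReal) = Welfare P Q n m (Phi lam) := fun lam =>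
    EReal.coe_toReal (Aux.welfare_ne_top P Q n m hn hm (Phi lam))
      (Aux.welfare_ne_bot P Q n m hPint hQint hn hm (Phi lam))
  have hwelf_eq : ∀ lam : Fin K → ℝ,
      Welfare P Q n m (Phi lam) = SocialGain P Q n m (Phi lam) (muOf lam) := fun lam =>
    le_antisymm (Aux.welfare_le P Q n m (fun μ' h => hμmax lam μ' h))
      (Aux.socialGain_le_welfare P Q n m (Phi lam) (hμfeas lam))
  have hEnt_ne_bot : ∀ lam : Fin K → ℝ, Ent P Q n m (muOf lam) ≠ ⊥ := by
    intro lam hbot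
    have h1 : Welfare P Q n m (Phi lam) = ⊥ := by
      rw [hwelf_eq lam, Aux.socialGain_eq, hbot, EReal.add_bot]
    exact Aux.welfare_ne_bot P Q n m hPint hQint hn hm (Phi lam) h1
  have hEntCoe : ∀ lam : Fin K → ℝ,
      (((Ent P Q n m (muOf lam)).toReal : ℝ) : EReal) = Ent P Q n m (muOf lam) := fun lam =>
    EReal.coe_toReal (Aux.ent_ne_top P Q n m hn hm (muOf lam)) (hEnt_ne_bot lam)
  have hW_id : ∀ lam : Fin K → ℝ, WelfareR P Q n m (Phi lam)
      = Lpair (muOf lam) (Phi lam) + (Ent P Q n m (muOf lam)).toReal := by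
    intro lam
    have h1 : ((WelfareR P Q n m (Phi lam) : ℝ) : EReal)
        = ((Lpair (muOf lam) (Phi lam) + (Ent P Q n m (muOf lam)).toReal : ℝ) : EReal) := by
      rw [hWne lam, hwelf_eq lam, Aux.socialGain_eq, EReal.coe_add, hEntCoe lam]
    exact_mod_cast h1
  have hub : ∀ (lam : Fin K → ℝ) (μ : X → Y → ℝ), Feasible n m μ →
      SocialGain P Q n m (Phi lam) μ ≤ ((WelfareR P Q n m (Phi lam) : ℝ) : EReal) := by
    intro lam μ h
    rw [hWne lam]
    exact Aux.socialGain_le_welfare P Q n m (Phi lam) h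
  have hubR : ∀ (lam : Fin K → ℝ) (μ : X → Y → ℝ), Feasible n m μ → Ent P Q n m μ ≠ ⊥ →
      Lpair μ (Phi lam) + (Ent P Q n m μ).toReal ≤ WelfareR P Q n m (Phi lam) := by
    intro lam μ h hne
    have h1 := hub lam μ h
    rw [Aux.socialGain_eq, ← EReal.coe_toReal (Aux.ent_ne_top P Q n m hn hm μ) hne,
      ← EReal.coe_add] at h1
    exact_mod_cast h1
  have hlamA : ∀ lam : Fin K → ℝ,
      Lpair μhat (Phi lam) - WelfareR P Q n m (Phi lam) ≤
        Lpair μhat (Phi lamhat) - WelfareR P Q n m (Phi lamhat) := fun lam => hlamhat lam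
  set d : Fin K → ℝ := fun k => Lpair μhat (φ k) - Lpair (muOf lamhat) (φ k) with hddef
  set Phid : X → Y → ℝ := fun x y => ∑ k, d k * φ k x y with hPhiddef
  -- Step 1: moment matching
  have hmm : ∀ k, Lpair (muOf lamhat) (φ k) = Lpair μhat (φ k) := by
    set t : ℕ → ℝ := fun j => 1 / (j + 1) with htdef
    have ht_pos : ∀ j, 0 < t j := fun j => by
      show (0:ℝ) < 1 / (j + 1); positivity
    have ht_le1 : ∀ j, t j ≤ 1 := fun j => by
      show (1:ℝ) / (j + 1) ≤ 1
      rw [div_le_one (by positivity)]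
      linarith [Nat.cast_nonneg (α := ℝ) j]
    have ht_lim : Filter.Tendsto t Filter.atTop (nhds 0) :=
      tendsto_one_div_add_atTop_nhds_zero_nat
    set lamn : ℕ → Fin K → ℝ := fun j k => lamhat k + t j * d k with hlamndef
    have hLexp : ∀ (j : ℕ) (μ : X → Y → ℝ),
        Lpair μ (Phi (lamn j)) = Lpair μ (Phi lamhat) + t j * Lpair μ Phid := by
      intro j μ
      simp only [hPhidef, hPhiddef]
      rw [Aux.Lpair_sum, Aux.Lpair_sum, Aux.Lpair_sum, Finset.mul_sum,
        ← Finset.sum_add_distrib]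
      refine Finset.sum_congr rfl fun k _ => ?_
      have hl : lamn j k = lamhat k + t j * d k := rfl
      rw [hl]; ring
    have hA : ∀ j, t j * Lpair μhat Phid ≤
        WelfareR P Q n m (Phi (lamn j)) - WelfareR P Q n m (Phi lamhat) := by
      intro j
      have h1 := hlamA (lamn j)
      have h2 := hLexp j μhat
      linarith
    have hC : ∀ j, Lpair (muOf (lamn j)) (Phi lamhat) +
        (Ent P Q n m (muOf (lamn j))).toReal ≤ WelfareR P Q n m (Phi lamhat) :=
      fun j => hubR lamhat (muOf (lamn j)) (hμfeas (lamn j)) (hEnt_ne_bot (lamn j))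
    have hD : ∀ j, Lpair μhat Phid ≤ Lpair (muOf (lamn j)) Phid := by
      intro j
      have h1 := hA j
      have h2 := hC j
      have h3 := hW_id (lamn j)
      have h4 := hLexp j (muOf (lamn j))
      have h6 : t j * Lpair μhat Phid ≤ t j * Lpair (muOf (lamn j)) Phid := by linarith
      exact le_of_mul_le_mul_left h6 (ht_pos j)
    have hE2 : ∀ j, WelfareR P Q n m (Phi lamhat) + t j * Lpair μhat Phid
        - Lpair (muOf (lamn j)) (Phi lamhat) - t j * Lpair (muOf (lamn j)) Phid
        ≤ (Ent P Q n m (muOf (lamn j))).toReal := by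
      intro j
      have h1 := hA j
      have h3 := hW_id (lamn j)
      have h4 := hLexp j (muOf (lamn j))
      linarith
    set sx : ℕ → X → ℝ :=
      fun j x => (EmaxStar (P x) (fun y => muOf (lamn j) x y / n x)).toReal with hsxdef
    set sy : ℕ → Y → ℝ :=
      fun j y => (EmaxStar (Q y) (fun x => muOf (lamn j) x y / m y)).toReal with hsydef
    have hSx_coe : ∀ j x, EmaxStar (P x) (fun y => muOf (lamn j) x y / n x)
        = ((sx j x : ℝ) : EReal) := fun j x =>
      (EReal.coe_toReal
        (Aux.emaxStar_fst_ne_top P Q n m hn (muOf (lamn j)) (hEnt_ne_bot (lamn j)) x)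
        (Aux.emaxStar_ne_bot _)).symm
    have hSy_coe : ∀ j y, EmaxStar (Q y) (fun x => muOf (lamn j) x y / m y)
        = ((sy j y : ℝ) : EReal) := fun j y =>
      (EReal.coe_toReal
        (Aux.emaxStar_snd_ne_top P Q n m hm (muOf (lamn j)) (hEnt_ne_bot (lamn j)) y)
        (Aux.emaxStar_ne_bot _)).symm
    have hent_id : ∀ j, (Ent P Q n m (muOf (lamn j))).toReal
        = -(∑ x, n x * sx j x) - ∑ y, m y * sy j y := by
      intro j
      simp only [hsxdef, hsydef]
      rw [Aux.ent_eq_coe P Q n m hn hm (muOf (lamn j)) (hEnt_ne_bot (lamn j)),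
        EReal.toReal_coe]
    have hsx_lb : ∀ j x, -Emax (P x) 0 ≤ sx j x := by
      intro j x
      have h1 : ((-Emax (P x) 0 : ℝ) : EReal) ≤ ((sx j x : ℝ) : EReal) := by
        rw [← hSx_coe j x]
        exact Aux.neg_emax_zero_le _
      exact_mod_cast h1
    have hsy_lb : ∀ j y, -Emax (Q y) 0 ≤ sy j y := by
      intro j y
      have h1 : ((-Emax (Q y) 0 : ℝ) : EReal) ≤ ((sy j y : ℝ) : EReal) := by
        rw [← hSy_coe j y]
        exact Aux.neg_emax_zero_le _
      exact_mod_cast h1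
    have habs1 : ∀ j, -|Lpair μhat Phid| ≤ t j * Lpair μhat Phid := by
      intro j
      have h0 : 0 ≤ (1 - t j) * |Lpair μhat Phid| :=
        mul_nonneg (by linarith [ht_le1 j]) (abs_nonneg _)
      have h1 : t j * |Lpair μhat Phid| ≤ |Lpair μhat Phid| := by nlinarith [h0]
      have h2 : |t j * Lpair μhat Phid| ≤ |Lpair μhat Phid| := by
        rw [abs_mul, abs_of_pos (ht_pos j)]; exact h1
      linarith [neg_abs_le (t j * Lpair μhat Phid)]
    have habs2 : ∀ j, t j * Lpair (muOf (lamn j)) Phid ≤ ∑ x, ∑ y, n x * |Phid x y| := by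
      intro j
      have h0 : 0 ≤ (1 - t j) * |Lpair (muOf (lamn j)) Phid| :=
        mul_nonneg (by linarith [ht_le1 j]) (abs_nonneg _)
      have h1 : t j * |Lpair (muOf (lamn j)) Phid| ≤ |Lpair (muOf (lamn j)) Phid| := by
        nlinarith [h0]
      calc t j * Lpair (muOf (lamn j)) Phid
          ≤ |t j * Lpair (muOf (lamn j)) Phid| := le_abs_self _
        _ ≤ |Lpair (muOf (lamn j)) Phid| := by
            rw [abs_mul, abs_of_pos (ht_pos j)]; exact h1
        _ ≤ ∑ x, ∑ y, n x * |Phid x y| := Aux.abs_Lpair_le n m (hμfeas (lamn j)) Phid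
    set C1 : ℝ := WelfareR P Q n m (Phi lamhat) - |Lpair μhat Phid|
      - (∑ x, ∑ y, n x * |Phi lamhat x y|) - (∑ x, ∑ y, n x * |Phid x y|) with hC1def
    have hE_lb : ∀ j, C1 ≤ (Ent P Q n m (muOf (lamn j))).toReal := by
      intro j
      have h1 := hE2 j
      have h2 : Lpair (muOf (lamn j)) (Phi lamhat) ≤ ∑ x, ∑ y, n x * |Phi lamhat x y| :=
        (le_abs_self _).trans (Aux.abs_Lpair_le n m (hμfeas (lamn j)) _)
      have h3 := habs1 j
      have h4 := habs2 j
      rw [hC1def]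
      linarith
    have hsum_ub : ∀ j, ∑ x, n x * sx j x + ∑ y, m y * sy j y ≤ -C1 := by
      intro j
      have h1 := hE_lb j
      have h2 := hent_id j
      linarith
    have hsx_bound : ∀ x, ∃ R, ∀ j, |sx j x| ≤ R := by
      intro x
      have hub' : ∀ j, n x * sx j x ≤ -C1 - (∑ x', n x' * (-Emax (P x') 0))
          - (∑ y, m y * (-Emax (Q y) 0)) + n x * (-Emax (P x) 0) := by
        intro j
        have h3 : ∑ x' ∈ Finset.univ.erase x, n x' * (-Emax (P x') 0) ≤
            ∑ x' ∈ Finset.univ.erase x, n x' * sx j x' :=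
          Finset.sum_le_sum fun x' _ =>
            mul_le_mul_of_nonneg_left (hsx_lb j x') (hn x').le
        have h4 : ∑ y, m y * (-Emax (Q y) 0) ≤ ∑ y, m y * sy j y :=
          Finset.sum_le_sum fun y _ =>
            mul_le_mul_of_nonneg_left (hsy_lb j y) (hm y).le
        have h5 : n x * sx j x + ∑ x' ∈ Finset.univ.erase x, n x' * sx j x'
            = ∑ x', n x' * sx j x' :=
          Finset.add_sum_erase Finset.univ (fun x' => n x' * sx j x') (Finset.mem_univ x)
        have h6 : n x * (-Emax (P x) 0) + ∑ x' ∈ Finset.univ.erase x, n x' * (-Emax (P x') 0)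
            = ∑ x', n x' * (-Emax (P x') 0) :=
          Finset.add_sum_erase Finset.univ (fun x' => n x' * (-Emax (P x') 0)) (Finset.mem_univ x)
        have h7 := hsum_ub j
        linarith
      refine ⟨max ((-C1 - (∑ x', n x' * (-Emax (P x') 0))
        - (∑ y, m y * (-Emax (Q y) 0)) + n x * (-Emax (P x) 0)) / n x) (Emax (P x) 0),
        fun j => ?_⟩
      rw [abs_le]
      constructor
      · have h1 := hsx_lb j x
        have h2 : Emax (P x) 0 ≤ max ((-C1 - (∑ x', n x' * (-Emax (P x') 0))
            - (∑ y, m y * (-Emax (Q y) 0)) + n x * (-Emax (P x) 0)) / n x) (Emax (P x) 0) :=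
          le_max_right _ _
        linarith
      · have h1 := hub' j
        have h2 : sx j x ≤ (-C1 - (∑ x', n x' * (-Emax (P x') 0))
            - (∑ y, m y * (-Emax (Q y) 0)) + n x * (-Emax (P x) 0)) / n x := by
          rw [le_div_iff₀ (hn x)]
          linarith
        exact h2.trans (le_max_left _ _)
    have hsy_bound : ∀ y, ∃ R, ∀ j, |sy j y| ≤ R := by
      intro y
      have hub' : ∀ j, m y * sy j y ≤ -C1 - (∑ x, n x * (-Emax (P x) 0))
          - (∑ y', m y' * (-Emax (Q y') 0)) + m y * (-Emax (Q y) 0) := by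
        intro j
        have h3 : ∑ y' ∈ Finset.univ.erase y, m y' * (-Emax (Q y') 0) ≤
            ∑ y' ∈ Finset.univ.erase y, m y' * sy j y' :=
          Finset.sum_le_sum fun y' _ =>
            mul_le_mul_of_nonneg_left (hsy_lb j y') (hm y').le
        have h4 : ∑ x, n x * (-Emax (P x) 0) ≤ ∑ x, n x * sx j x :=
          Finset.sum_le_sum fun x _ =>
            mul_le_mul_of_nonneg_left (hsx_lb j x) (hn x).le
        have h5 : m y * sy j y + ∑ y' ∈ Finset.univ.erase y, m y' * sy j y'
            = ∑ y', m y' * sy j y' :=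
          Finset.add_sum_erase Finset.univ (fun y' => m y' * sy j y') (Finset.mem_univ y)
        have h6 : m y * (-Emax (Q y) 0) + ∑ y' ∈ Finset.univ.erase y, m y' * (-Emax (Q y') 0)
            = ∑ y', m y' * (-Emax (Q y') 0) :=
          Finset.add_sum_erase Finset.univ (fun y' => m y' * (-Emax (Q y') 0)) (Finset.mem_univ y)
        have h7 := hsum_ub j
        linarith
      refine ⟨max ((-C1 - (∑ x, n x * (-Emax (P x) 0))
        - (∑ y', m y' * (-Emax (Q y') 0)) + m y * (-Emax (Q y) 0)) / m y) (Emax (Q y) 0),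
        fun j => ?_⟩
      rw [abs_le]
      constructor
      · have h1 := hsy_lb j y
        have h2 : Emax (Q y) 0 ≤ max ((-C1 - (∑ x, n x * (-Emax (P x) 0))
            - (∑ y', m y' * (-Emax (Q y') 0)) + m y * (-Emax (Q y) 0)) / m y) (Emax (Q y) 0) :=
          le_max_right _ _
        linarith
      · have h1 := hub' j
        have h2 : sy j y ≤ (-C1 - (∑ x, n x * (-Emax (P x) 0))
            - (∑ y', m y' * (-Emax (Q y') 0)) + m y * (-Emax (Q y) 0)) / m y := by
          rw [le_div_iff₀ (hm y)]
          linarith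
        exact h2.trans (le_max_left _ _)
    -- extraction of a convergent subsequence
    set w : ℕ → ((X × Y) ⊕ (X ⊕ Y)) → ℝ := fun j =>
      Sum.elim (fun p => muOf (lamn j) p.1 p.2) (Sum.elim (sx j) (sy j)) with hwdef
    have hwbound : ∀ i : (X × Y) ⊕ (X ⊕ Y), ∃ R, ∀ j, |w j i| ≤ R := by
      rintro (⟨x, y⟩ | x | y)
      · refine ⟨n x, fun j => ?_⟩
        have h1 : w j (Sum.inl (x, y)) = muOf (lamn j) x y := rfl
        rw [h1, abs_of_nonneg ((hμfeas (lamn j)).1 x y)]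
        exact Aux.mu_le_n n m (hμfeas (lamn j)) x y
      · exact hsx_bound x
      · exact hsy_bound y
    choose R hR using hwbound
    have hRnn : ∀ i, 0 ≤ R i := fun i => (abs_nonneg _).trans (hR i 0)
    have hbdd : Bornology.IsBounded (Set.range w) := by
      refine (Metric.isBounded_closedBall
        (x := (0 : ((X × Y) ⊕ (X ⊕ Y)) → ℝ)) (r := ∑ i, R i)).subset ?_
      rintro _ ⟨j, rfl⟩
      rw [Metric.mem_closedBall, dist_zero_right]
      rw [pi_norm_le_iff_of_nonneg (Finset.sum_nonneg fun i _ => hRnn i)]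
      intro i
      rw [Real.norm_eq_abs]
      exact (hR i j).trans (Finset.single_le_sum (fun i' _ => hRnn i') (Finset.mem_univ i))
    obtain ⟨wl, -, g, hg, hconv⟩ :=
      tendsto_subseq_of_bounded hbdd (fun j => Set.mem_range_self j)
    have hcoord : ∀ i, Filter.Tendsto (fun j => w (g j) i) Filter.atTop (nhds (wl i)) :=
      fun i => tendsto_pi_nhds.1 hconv i
    set μs : X → Y → ℝ := fun x y => wl (Sum.inl (x, y)) with hμsdef
    set sxs : X → ℝ := fun x => wl (Sum.inr (Sum.inl x)) with hsxsdef
    set sys : Y → ℝ := fun y => wl (Sum.inr (Sum.inr y)) with hsysdef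
    have hμconv : ∀ x y,
        Filter.Tendsto (fun j => muOf (lamn (g j)) x y) Filter.atTop (nhds (μs x y)) :=
      fun x y => hcoord (Sum.inl (x, y))
    have hsxconv : ∀ x, Filter.Tendsto (fun j => sx (g j) x) Filter.atTop (nhds (sxs x)) :=
      fun x => hcoord (Sum.inr (Sum.inl x))
    have hsyconv : ∀ y, Filter.Tendsto (fun j => sy (g j) y) Filter.atTop (nhds (sys y)) :=
      fun y => hcoord (Sum.inr (Sum.inr y))
    have htg : Filter.Tendsto (fun j => t (g j)) Filter.atTop (nhds 0) :=
      ht_lim.comp hg.tendsto_atTop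
    have hμtend : Filter.Tendsto (fun j => muOf (lamn (g j))) Filter.atTop (nhds μs) :=
      tendsto_pi_nhds.2 fun x => tendsto_pi_nhds.2 fun y => hμconv x y
    have hLtend : ∀ f : X → Y → ℝ,
        Filter.Tendsto (fun j => Lpair (muOf (lamn (g j))) f) Filter.atTop
          (nhds (Lpair μs f)) :=
      fun f => ((Aux.continuous_Lpair f).tendsto μs).comp hμtend
    have hμsfeas : Feasible n m μs := by
      refine ⟨fun x y => ge_of_tendsto (hμconv x y)
        (Filter.Eventually.of_forall fun j => (hμfeas (lamn (g j))).1 x y),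
        fun x => ?_, fun y => ?_⟩
      · exact le_of_tendsto (tendsto_finset_sum _ fun y _ => hμconv x y)
          (Filter.Eventually.of_forall fun j => (hμfeas (lamn (g j))).2.1 x)
      · exact le_of_tendsto (tendsto_finset_sum _ fun x _ => hμconv x y)
          (Filter.Eventually.of_forall fun j => (hμfeas (lamn (g j))).2.2 y)
    have hSxs : ∀ x, EmaxStar (P x) (fun y => μs x y / n x) ≤ ((sxs x : ℝ) : EReal) := by
      intro x
      exact Aux.emaxStar_le_limit
        (ν := fun j y => muOf (lamn (g j)) x y / n x)
        (fun y => (hμconv x y).div_const (n x)) (hsxconv x)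
        (fun j => le_of_eq (hSx_coe (g j) x))
    have hSys : ∀ y, EmaxStar (Q y) (fun x => μs x y / m y) ≤ ((sys y : ℝ) : EReal) := by
      intro y
      exact Aux.emaxStar_le_limit
        (ν := fun j x => muOf (lamn (g j)) x y / m y)
        (fun x => (hμconv x y).div_const (m y)) (hsyconv y)
        (fun j => le_of_eq (hSy_coe (g j) y))
    set es : ℝ := -(∑ x, n x * sxs x) - ∑ y, m y * sys y with hesdef
    have hestend : Filter.Tendsto (fun j => (Ent P Q n m (muOf (lamn (g j)))).toReal)
        Filter.atTop (nhds es) := by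
      have heq : (fun j => (Ent P Q n m (muOf (lamn (g j)))).toReal)
          = fun j => -(∑ x, n x * sx (g j) x) - ∑ y, m y * sy (g j) y :=
        funext fun j => hent_id (g j)
      rw [heq, hesdef]
      exact ((tendsto_finset_sum _ fun x _ => (hsxconv x).const_mul (n x)).neg).sub
        (tendsto_finset_sum _ fun y _ => (hsyconv y).const_mul (m y))
    have hes_lb : WelfareR P Q n m (Phi lamhat) - Lpair μs (Phi lamhat) ≤ es := by
      refine le_of_tendsto_of_tendsto' ?_ hestend (fun j => hE2 (g j))
      have h1 : Filter.Tendsto (fun j => WelfareR P Q n m (Phi lamhat)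
          + t (g j) * Lpair μhat Phid - Lpair (muOf (lamn (g j))) (Phi lamhat)
          - t (g j) * Lpair (muOf (lamn (g j))) Phid) Filter.atTop
          (nhds (WelfareR P Q n m (Phi lamhat) + 0 * Lpair μhat Phid
            - Lpair μs (Phi lamhat) - 0 * Lpair μs Phid)) :=
        ((tendsto_const_nhds.add (htg.mul_const _)).sub (hLtend (Phi lamhat))).sub
          (htg.mul (hLtend Phid))
      simpa using h1
    have hSGs : ((WelfareR P Q n m (Phi lamhat) : ℝ) : EReal)
        ≤ SocialGain P Q n m (Phi lamhat) μs := by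
      have h1 : ((es : ℝ) : EReal) ≤ Ent P Q n m μs := by
        rw [hesdef]
        exact Aux.coe_le_ent P Q n m hn hm μs sxs sys hSxs hSys
      calc ((WelfareR P Q n m (Phi lamhat) : ℝ) : EReal)
          ≤ ((Lpair μs (Phi lamhat) + es : ℝ) : EReal) := by
            have h2 : WelfareR P Q n m (Phi lamhat) ≤ Lpair μs (Phi lamhat) + es := by
              linarith [hes_lb]
            exact_mod_cast h2
        _ = ((Lpair μs (Phi lamhat) : ℝ) : EReal) + ((es : ℝ) : EReal) := EReal.coe_add _ _
        _ ≤ ((Lpair μs (Phi lamhat) : ℝ) : EReal) + Ent P Q n m μs := add_le_add le_rfl h1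
        _ = SocialGain P Q n m (Phi lamhat) μs := (Aux.socialGain_eq P Q n m _ μs).symm
    have hμs_eq : μs = muOf lamhat :=
      hμuniq lamhat μs hμsfeas (fun μ'' h'' => (hub lamhat μ'' h'').trans hSGs)
    have hfinal : Lpair μhat Phid ≤ Lpair (muOf lamhat) Phid := by
      have h1 := ge_of_tendsto (hLtend Phid)
        (Filter.Eventually.of_forall fun j => hD (g j))
      rwa [hμs_eq] at h1
    have hsum0 : ∑ k, d k * d k ≤ 0 := by
      have h1 : Lpair (muOf lamhat) Phid = ∑ k, d k * Lpair (muOf lamhat) (φ k) := by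
        simp only [hPhiddef]
        exact Aux.Lpair_sum d φ (muOf lamhat)
      have h2 : Lpair μhat Phid = ∑ k, d k * Lpair μhat (φ k) := by
        simp only [hPhiddef]
        exact Aux.Lpair_sum d φ μhat
      have h3 : ∑ k, d k * Lpair μhat (φ k) - ∑ k, d k * Lpair (muOf lamhat) (φ k)
          = ∑ k, d k * d k := by
        rw [← Finset.sum_sub_distrib]
        refine Finset.sum_congr rfl fun k _ => ?_
        have h4 : Lpair μhat (φ k) - Lpair (muOf lamhat) (φ k) = d k := rfl
        rw [← mul_sub, h4]
      linarith
    intro k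
    have h4 : ∑ k, d k * d k = 0 :=
      le_antisymm hsum0 (Finset.sum_nonneg fun k _ => mul_self_nonneg _)
    have h5 := (Finset.sum_eq_zero_iff_of_nonneg
      (fun k _ => mul_self_nonneg (d k))).1 h4 k (Finset.mem_univ k)
    have h6 : d k = 0 := mul_self_eq_zero.1 h5
    have h7 : Lpair μhat (φ k) - Lpair (muOf lamhat) (φ k) = d k := rfl
    linarith
  -- Step 2: entropy maximality under moment constraints
  have h1b : ∀ μ : X → Y → ℝ, Feasible n m μ →
      (∀ k, Lpair μ (φ k) = Lpair μhat (φ k)) →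
      Ent P Q n m μ ≤ Ent P Q n m (muOf lamhat) := by
    intro μ hfe hmom
    have hL : Lpair μ (fun x y => ∑ k, lamhat k * φ k x y)
        = Lpair (muOf lamhat) (fun x y => ∑ k, lamhat k * φ k x y) := by
      rw [Aux.Lpair_sum, Aux.Lpair_sum]
      exact Finset.sum_congr rfl fun k _ => by rw [hmom k, hmm k]
    have h2 := hμmax lamhat μ hfe
    rw [Aux.socialGain_eq, Aux.socialGain_eq, hL] at h2
    exact (EReal.addLECancellable_coe _) h2
  have h2a : Ent P Q n m μhat ≤ Ent P Q n m (muOf lamhat) :=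
    h1b μhat hhatfeas (fun k => rfl)
  refine ⟨⟨fun k => hmm k, fun μ hfe hmom => h1b μ hfe hmom⟩, h2a, ⟨?_, ?_⟩, ?_⟩
  · intro heq
    refine (hμuniq lamhat μhat hhatfeas ?_).symm
    intro μ'' h''
    have hL : Lpair μhat (fun x y => ∑ k, lamhat k * φ k x y)
        = Lpair (muOf lamhat) (fun x y => ∑ k, lamhat k * φ k x y) := by
      rw [Aux.Lpair_sum, Aux.Lpair_sum]
      exact Finset.sum_congr rfl fun k _ => by rw [hmm k]
    have hSG : SocialGain P Q n m (fun x y => ∑ k, lamhat k * φ k x y) μhat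
        = SocialGain P Q n m (fun x y => ∑ k, lamhat k * φ k x y) (muOf lamhat) := by
      rw [Aux.socialGain_eq, Aux.socialGain_eq, hL, heq]
    rw [hSG]
    exact hμmax lamhat μ'' h''
  · intro heq
    rw [heq]
  · intro lam hfit
    refine le_antisymm h2a ?_
    have hmomc : Lpair (muOf lamhat) (fun x y => ∑ k, lam k * φ k x y)
        = Lpair (muOf lam) (fun x y => ∑ k, lam k * φ k x y) := by
      rw [← hfit, Aux.Lpair_sum, Aux.Lpair_sum]
      exact Finset.sum_congr rfl fun k _ => by rw [hmm k]
    have h2 := hμmax lam (muOf lamhat) (hμfeas lamhat)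
    rw [Aux.socialGain_eq, Aux.socialGain_eq, hmomc, ← hfit] at h2
    exact (EReal.addLECancellable_coe _) h2


end
end
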